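/- arXiv:2105.00801 — 7 statements merged into one kernel-verified Lean document; each statement's English description precedes it below -/
import Mathlib

section
/- Let X be a random variable over a finite set 𝒳 distributed according to P_X or Q_X, and let S ⊆ 𝒳 with P_X(S) > 0. Then D(P_{X|X∈S} || Q_X) ≤ (1/P_X(S)) · (D(P_X||Q_X) + 1/e + 1). -/
open Finset

def IsDist {α : Type*} [Fintype α] (P : α → ℝ) : Prop :=
  (∀ x, 0 ≤ P x) ∧ ∑ x, P x = 1

noncomputable def KL {α : Type*} [Fintype α] (P Q : α → ℝ) : ℝ :=
  ∑ x, P x * Real.log (P x / Q x)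

/-- `t * log (t/q) ≥ -q` for nonneg `t, q` (with junk values `log 0 = 0`). -/
lemma aux_neg_q_le (t q : ℝ) (ht : 0 ≤ t) (hq : 0 ≤ q) :
    -q ≤ t * Real.log (t / q) := by
  rcases eq_or_lt_of_le ht with h | h
  · simp [← h]; linarith
  rcases eq_or_lt_of_le hq with h' | h'
  · simp [← h']
  have h1 : Real.log (q / t) ≤ q / t - 1 :=
    Real.log_le_sub_one_of_pos (by positivity)
  have h2 : Real.log (t / q) = - Real.log (q / t) := by
    rw [← Real.log_inv]; congr 1; field_simp
  have h3 := mul_le_mul_of_nonneg_left h1 ht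
  have h4 : t * (q / t - 1) = q - t := by field_simp
  rw [h2]; nlinarith

/-- `p * log (1/p) ≤ 1/e` for `0 < p ≤ 1`. -/
lemma aux_entropy_le (p : ℝ) (hp : 0 < p) : p * Real.log (1 / p) ≤ 1 / Real.exp 1 := by
  have he : (0:ℝ) < Real.exp 1 := Real.exp_pos 1
  have h1 : Real.log (1 / (p * Real.exp 1)) ≤ 1 / (p * Real.exp 1) - 1 :=
    Real.log_le_sub_one_of_pos (by positivity)
  have h2 : Real.log (1 / (p * Real.exp 1)) = Real.log (1 / p) - 1 := by
    rw [one_div, one_div, Real.log_inv, Real.log_inv, Real.log_mul (ne_of_gt hp) (ne_of_gt he),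
      Real.log_exp]
    ring
  have h3 : Real.log (1 / p) ≤ 1 / (p * Real.exp 1) := by linarith
  calc p * Real.log (1 / p) ≤ p * (1 / (p * Real.exp 1)) :=
        mul_le_mul_of_nonneg_left h3 hp.le
    _ = 1 / Real.exp 1 := by field_simp

/-- For distributions `P`, `Q` over a finite set and `S` with `P(S) > 0`,
`D(P_{X|X∈S} || Q) ≤ (1/P(S)) · (D(P||Q) + 1/e + 1)`. -/
theorem kl_cond_set_le {α : Type*} [Fintype α] [DecidableEq α]
    (P Q : α → ℝ) (hP : IsDist P) (hQ : IsDist Q)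
    (S : Finset α) (hS : 0 < ∑ x ∈ S, P x) :
    KL (fun x => if x ∈ S then P x / ∑ y ∈ S, P y else 0) Q ≤
      (1 / ∑ x ∈ S, P x) * (KL P Q + 1 / Real.exp 1 + 1) := by
  set p : ℝ := ∑ x ∈ S, P x with hpdef
  have hp : 0 < p := hS
  have hp1 : p ≤ 1 := by
    rw [← hP.2]
    exact Finset.sum_le_sum_of_subset_of_nonneg (Finset.subset_univ S)
      (fun i _ _ => hP.1 i)
  -- rewrite the conditional KL as a sum over S
  have hKLc : KL (fun x => if x ∈ S then P x / p else 0) Q =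
      ∑ x ∈ S, (P x / p) * Real.log ((P x / p) / Q x) := by
    unfold KL
    rw [← Finset.sum_subset (Finset.subset_univ S)
      (fun x _ hx => by simp [if_neg hx])]
    exact Finset.sum_congr rfl (fun x hx => by simp [if_pos hx])
  have hmul : p * KL (fun x => if x ∈ S then P x / p else 0) Q =
      ∑ x ∈ S, P x * Real.log ((P x / p) / Q x) := by
    rw [hKLc, Finset.mul_sum]
    refine Finset.sum_congr rfl (fun x hx => ?_)
    rw [← mul_assoc, mul_div_cancel₀ _ (ne_of_gt hp)]
  -- pointwise log splitting bound
  have hpt : ∀ x ∈ S, P x * Real.log ((P x / p) / Q x) ≤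
      P x * Real.log (P x / Q x) + P x * Real.log (1 / p) := by
    intro x _
    rcases eq_or_lt_of_le (hP.1 x) with h | h
    · simp [← h]
    rcases eq_or_lt_of_le (hQ.1 x) with h' | h'
    · have : P x / p / Q x = 0 := by rw [← h', div_zero]
      have hP0 : P x / Q x = 0 := by rw [← h', div_zero]
      rw [this, hP0, Real.log_zero, mul_zero, zero_add]
      have hlog : 0 ≤ Real.log (1 / p) := Real.log_nonneg (by
        rw [le_div_iff₀ hp]; linarith)
      exact mul_nonneg h.le hlog
    · have : (P x / p) / Q x = (P x / Q x) * (1 / p) := by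
        rw [mul_one_div, div_div, div_div, mul_comm]
      rw [this, Real.log_mul (div_ne_zero h.ne' h'.ne') (one_div_ne_zero hp.ne'), mul_add]
  -- sum over S of P x * log (P x / Q x) ≤ KL P Q + 1
  have hsumS : ∑ x ∈ S, P x * Real.log (P x / Q x) ≤ KL P Q + 1 := by
    have hsplit : KL P Q = ∑ x ∈ S, P x * Real.log (P x / Q x) +
        ∑ x ∈ Sᶜ, P x * Real.log (P x / Q x) := by
      unfold KL
      rw [← Finset.sum_add_sum_compl S]
    have hcompl : -(1:ℝ) ≤ ∑ x ∈ Sᶜ, P x * Real.log (P x / Q x) := by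
      have h1 : ∑ x ∈ Sᶜ, (-(Q x)) ≤ ∑ x ∈ Sᶜ, P x * Real.log (P x / Q x) :=
        Finset.sum_le_sum (fun x _ => aux_neg_q_le (P x) (Q x) (hP.1 x) (hQ.1 x))
      have h2 : ∑ x ∈ Sᶜ, Q x ≤ 1 := by
        rw [← hQ.2]
        exact Finset.sum_le_sum_of_subset_of_nonneg (Finset.subset_univ Sᶜ)
          (fun i _ _ => hQ.1 i)
      rw [Finset.sum_neg_distrib] at h1
      linarith
    linarith
  have hent : ∑ x ∈ S, P x * Real.log (1 / p) ≤ 1 / Real.exp 1 := by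
    rw [← Finset.sum_mul]
    exact aux_entropy_le p hp
  have key : p * KL (fun x => if x ∈ S then P x / p else 0) Q ≤
      KL P Q + 1 / Real.exp 1 + 1 := by
    rw [hmul]
    calc ∑ x ∈ S, P x * Real.log ((P x / p) / Q x)
        ≤ ∑ x ∈ S, (P x * Real.log (P x / Q x) + P x * Real.log (1 / p)) :=
          Finset.sum_le_sum hpt
      _ = ∑ x ∈ S, P x * Real.log (P x / Q x) + ∑ x ∈ S, P x * Real.log (1 / p) :=
          Finset.sum_add_distrib
      _ ≤ (KL P Q + 1) + 1 / Real.exp 1 := add_le_add hsumS hent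
      _ = KL P Q + 1 / Real.exp 1 + 1 := by ring
  rw [one_div, inv_mul_eq_div, le_div_iff₀ hp]
  linarith [key]
end

section
/- For any p ∈ [0,1] and any δ ∈ [0,1], the KL-divergence between Bernoulli((1-δ)p) and Bernoulli(p) is at least δ²p/2. -/
/-!
With `q = (1 - δ) p`, the first term of `D(q ‖ p)` is `p (1 - δ) log (1 - δ)` and the second is at
least `p - q = δ p`, because `log y ≥ 1 - 1/y`. Hence `D(q ‖ p) ≥ p ((1 - δ) log (1 - δ) + δ)`, and
`x log x ≥ (x² - 1) / 2` on `[0, 1]` (this is `t ≤ sinh t` at `t = -log x`) turns this into `δ² p / 2`.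
-/

/-- KL-divergence (natural logarithm) between `Bernoulli p` and `Bernoulli q`,
valued in `EReal` so that the divergence is `⊤` when absolute continuity fails. -/
noncomputable def klBern (p q : ℝ) : EReal :=
  if (0 < p ∧ q = 0) ∨ (p < 1 ∧ q = 1) then ⊤
  else ((p * Real.log (p / q) + (1 - p) * Real.log ((1 - p) / (1 - q)) : ℝ) : EReal)

namespace Real

theorem sub_inv_div_two_le_log {x : ℝ} (hx0 : 0 < x) (hx1 : x ≤ 1) : (x - x⁻¹) / 2 ≤ log x := by
  rw [← sinh_log hx0, sinh_le_self_iff]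
  exact log_nonpos hx0.le hx1

theorem sq_sub_one_div_two_le_mul_log {x : ℝ} (hx0 : 0 ≤ x) (hx1 : x ≤ 1) :
    (x ^ 2 - 1) / 2 ≤ x * log x := by
  obtain rfl | hx0 := hx0.eq_or_lt
  · norm_num
  calc (x ^ 2 - 1) / 2 = x * ((x - x⁻¹) / 2) := by field_simp
    _ ≤ x * log x := mul_le_mul_of_nonneg_left (sub_inv_div_two_le_log hx0 hx1) hx0.le

theorem sub_le_mul_log_div {a b : ℝ} (ha : 0 < a) (hb : 0 < b) : a - b ≤ a * log (a / b) :=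
  calc a - b = a * (1 - (a / b)⁻¹) := by field_simp
    _ ≤ a * log (a / b) := mul_le_mul_of_nonneg_left (one_sub_inv_le_log_of_pos (by positivity)) ha.le

theorem mul_mul_log_mul_div_self (c p : ℝ) : c * p * log (c * p / p) = p * (c * log c) := by
  obtain rfl | hp := eq_or_ne p 0
  · simp
  · rw [mul_div_cancel_right₀ c hp]
    ring

end Real

open Real in
theorem sq_mul_div_two_le_klBern_formula {p δ : ℝ} (hp0 : 0 ≤ p) (hp1 : p < 1)
    (hδ0 : 0 ≤ δ) (hδ1 : δ ≤ 1) :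
    δ ^ 2 * p / 2 ≤ (1 - δ) * p * log ((1 - δ) * p / p) +
      (1 - (1 - δ) * p) * log ((1 - (1 - δ) * p) / (1 - p)) := by
  have hq1 : 0 < 1 - (1 - δ) * p := by nlinarith
  calc δ ^ 2 * p / 2 = p * (((1 - δ) ^ 2 - 1) / 2) + ((1 - (1 - δ) * p) - (1 - p)) := by ring
    _ ≤ p * ((1 - δ) * log (1 - δ)) + (1 - (1 - δ) * p) * log ((1 - (1 - δ) * p) / (1 - p)) := by
      gcongr
      · exact sq_sub_one_div_two_le_mul_log (by linarith) (by linarith)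
      · exact sub_le_mul_log_div hq1 (by linarith)
    _ = _ := by rw [mul_mul_log_mul_div_self]

/-- For any `p ∈ [0,1]` and `δ ∈ [0,1]`,
`D(Bernoulli((1-δ)p) || Bernoulli(p)) ≥ δ² p / 2`. -/
theorem klBern_one_sub_ge (p δ : ℝ) (hp : p ∈ Set.Icc (0:ℝ) 1)
    (hδ : δ ∈ Set.Icc (0:ℝ) 1) :
    ((δ ^ 2 * p / 2 : ℝ) : EReal) ≤ klBern ((1 - δ) * p) p := by
  obtain ⟨hp0, hp1⟩ := hp
  obtain ⟨hδ0, hδ1⟩ := hδ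
  rcases hp1.lt_or_eq with hp1 | rfl
  · rw [klBern, if_neg]
    · exact EReal.coe_le_coe_iff.mpr (sq_mul_div_two_le_klBern_formula hp0 hp1 hδ0 hδ1)
    · rintro (⟨hq, rfl⟩ | ⟨-, rfl⟩) <;> simp_all
  · rcases hδ0.lt_or_eq with hδ0 | rfl
    · rw [klBern, if_pos (Or.inr ⟨by linarith, rfl⟩)]
      exact le_top
    · simp [klBern]
end

section
/- For any p ∈ [0,1] and any δ ∈ [0, 1/p − 1], the KL-divergence between Bernoulli((1+δ)p) and Bernoulli(p) is at least min{δ, δ²} · p / 4. -/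
/-! With `q = (1 + δ) p`, the first term of `D(q‖p)` is `q log (1 + δ) ≥ q · 2δ / (δ + 2)`, and
the second is at least `(1 - q) - (1 - p) = -δp` because `log x ≥ 1 - 1/x`. Together
`D(q‖p) ≥ δ² p / (δ + 2)`, which dominates `min{δ, δ²} p / 4`. -/

open Real

lemma sub_le_mul_log_div {a b : ℝ} (ha : 0 ≤ a) (hb : 0 < b) : a - b ≤ a * log (a / b) := by
  rcases ha.eq_or_lt with rfl | ha
  · simpa using hb.le
  calc a - b = a * (1 - (a / b)⁻¹) := by field_simp
    _ ≤ a * log (a / b) :=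
      mul_le_mul_of_nonneg_left (one_sub_inv_le_log_of_pos (div_pos ha hb)) ha.le

lemma klBern_of_mem_Ioo {p q : ℝ} (hq : q ∈ Set.Ioo 0 1) :
    klBern p q = ((p * log (p / q) + (1 - p) * log ((1 - p) / (1 - q)) : ℝ) : EReal) := by
  rw [klBern, if_neg]
  rintro (⟨-, h⟩ | ⟨-, h⟩) <;> linarith [hq.1, hq.2]

lemma sq_div_add_two_mul_le_klBern {p δ : ℝ} (hp : p ∈ Set.Ioo 0 1) (hδ : 0 ≤ δ)
    (hq : (1 + δ) * p ≤ 1) :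
    ((δ ^ 2 / (δ + 2) * p : ℝ) : EReal) ≤ klBern ((1 + δ) * p) p := by
  rw [klBern_of_mem_Ioo hp, EReal.coe_le_coe_iff]
  obtain ⟨hp0, hp1⟩ := hp
  have h_first : (1 + δ) * p * (2 * δ / (δ + 2)) ≤ (1 + δ) * p * log ((1 + δ) * p / p) := by
    rw [mul_div_cancel_right₀ _ hp0.ne']
    exact mul_le_mul_of_nonneg_left (le_log_one_add_of_nonneg hδ) (by positivity)
  have h_second : (1 - (1 + δ) * p) - (1 - p) ≤
      (1 - (1 + δ) * p) * log ((1 - (1 + δ) * p) / (1 - p)) :=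
    sub_le_mul_log_div (by linarith) (by linarith)
  have h_sum : δ ^ 2 / (δ + 2) * p =
      (1 + δ) * p * (2 * δ / (δ + 2)) + ((1 - (1 + δ) * p) - (1 - p)) := by
    field_simp
    ring
  linarith

lemma min_self_sq_div_four_le_sq_div_add_two {δ : ℝ} (hδ : 0 ≤ δ) :
    min δ (δ ^ 2) / 4 ≤ δ ^ 2 / (δ + 2) := by
  rw [div_le_div_iff₀ (by norm_num) (by linarith)]
  rcases le_total δ 1 with h | h
  · rw [min_eq_right (by nlinarith)]
    nlinarith [sq_nonneg δ]
  · rw [min_eq_left (by nlinarith)]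
    nlinarith

/-- For any `p ∈ [0,1]` and `δ ∈ [0, 1/p - 1]`,
`D(Bernoulli((1+δ)p) || Bernoulli(p)) ≥ min{δ, δ²} · p / 4`. -/
theorem klBern_one_add_ge (p δ : ℝ) (hp : p ∈ Set.Icc (0:ℝ) 1)
    (hδ : δ ∈ Set.Icc (0:ℝ) (1 / p - 1)) :
    ((min δ (δ ^ 2) * p / 4 : ℝ) : EReal) ≤ klBern ((1 + δ) * p) p := by
  obtain ⟨hp0, hp1⟩ := hp
  obtain ⟨hδ0, hδ1⟩ := hδ
  rcases hp0.eq_or_lt with rfl | hp0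
  · simp [klBern]
  rcases hp1.eq_or_lt with rfl | hp1
  · obtain rfl : δ = 0 := by norm_num at hδ1; linarith
    simp [klBern]
  have hq : (1 + δ) * p ≤ 1 := by
    rwa [le_sub_iff_add_le, le_div_iff₀ hp0, add_comm] at hδ1
  calc ((min δ (δ ^ 2) * p / 4 : ℝ) : EReal) ≤ ((δ ^ 2 / (δ + 2) * p : ℝ) : EReal) := by
        rw [EReal.coe_le_coe_iff, mul_div_right_comm]
        exact mul_le_mul_of_nonneg_right (min_self_sq_div_four_le_sq_div_add_two hδ0) hp0.le
    _ ≤ klBern ((1 + δ) * p) p := sq_div_add_two_mul_le_klBern ⟨hp0, hp1⟩ hδ0 hq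
end

section
/- Let L_1,...,L_n be independent real random variables with |L_i| ≤ ℓ, and let Z_i = (L_i/p_i)·B_i where B_i ~ Bernoulli(p_i) with p_i > 0 is independent of everything else. Let L = Σ L_i, Z = Σ Z_i, μ = E[L], p = min_i p_i, and Γ = Z/μ − 1. Then for any γ ∈ [0,1], Pr[|Γ| ≥ γ] ≤ 4·exp(−p·μ²·γ² / (5ℓ²n)). -/
/-!
Write `X i = L i / p i * B i - E[L i]` for the centred subsamples, so that `Z - μL = ∑ X i`.
Each `X i` is bounded by `2ℓ/pmin`, and since `B i ^ 2 = B i` with `B i` independent of `L i`,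
its second moment is at most `E[L i ^ 2] / p i ≤ ℓ²/pmin`. For such a variable the inequality
`exp x ≤ 1 + x + x²` (`|x| ≤ 1`) gives the Bernstein-type bound `E[exp (t X i)] ≤ exp (t² ℓ²/pmin)`
whenever `|t| ≤ pmin/(2ℓ)`. Multiplying over the independent summands and applying Chernoff's
bound at `t = γ μL pmin / (2nℓ²)`, which is admissible because `γ μL ≤ μL ≤ nℓ`, bounds each tail
of `∑ X i` beyond `γ μL` by `exp (-pmin μL² γ² / (4ℓ²n))`.
-/

open MeasureTheory ProbabilityTheory Real Finset

namespace ProbabilityTheory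

variable {Ω : Type*} {mΩ : MeasurableSpace Ω} {μ : Measure Ω}

structure IsBernoulli (B : Ω → ℝ) (q : ℝ) (μ : Measure Ω) : Prop where
  measurable : Measurable B
  ae_eq_zero_or_one : ∀ᵐ ω ∂μ, B ω = 0 ∨ B ω = 1
  measure_eq_one : μ {ω | B ω = 1} = ENNReal.ofReal q

section Subsample

variable {L B : Ω → ℝ} {q ℓ : ℝ}

lemma IsBernoulli.integral_eq (hB : IsBernoulli B q μ) (hq : 0 ≤ q) : ∫ ω, B ω ∂μ = q := by
  have hB_ind : B =ᵐ[μ] {ω | B ω = 1}.indicator 1 := by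
    filter_upwards [hB.ae_eq_zero_or_one] with ω h
    rcases h with h | h <;> simp [h]
  have hB1 : MeasurableSet {ω | B ω = 1} := hB.measurable (measurableSet_singleton 1)
  rw [integral_congr_ae hB_ind, integral_indicator_one hB1,
    measureReal_def, hB.measure_eq_one, ENNReal.toReal_ofReal hq]

lemma IsBernoulli.integral_mul_of_indepFun {f : Ω → ℝ} (hB : IsBernoulli B q μ) (hq : 0 ≤ q)
    (hfB : IndepFun f B μ) (hf : AEStronglyMeasurable f μ) :
    ∫ ω, f ω * B ω ∂μ = (∫ ω, f ω ∂μ) * q := by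
  rw [hfB.integral_fun_mul_eq_mul_integral hf hB.measurable.aestronglyMeasurable,
    hB.integral_eq hq]

lemma IsBernoulli.integral_div_mul (hB : IsBernoulli B q μ) (hq : 0 < q)
    (hLB : IndepFun L B μ) (hL : AEMeasurable L μ) :
    ∫ ω, L ω / q * B ω ∂μ = ∫ ω, L ω ∂μ := by
  simp_rw [div_mul_eq_mul_div, integral_div,
    hB.integral_mul_of_indepFun hq.le hLB hL.aestronglyMeasurable]
  field_simp

lemma abs_div_mul_le (hB01 : ∀ᵐ ω ∂μ, B ω = 0 ∨ B ω = 1) (hq : 0 < q)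
    (hLℓ : ∀ᵐ ω ∂μ, |L ω| ≤ ℓ) : ∀ᵐ ω ∂μ, |L ω / q * B ω| ≤ ℓ / q := by
  filter_upwards [hB01, hLℓ] with ω hB hL
  have hℓ : 0 ≤ ℓ := (abs_nonneg _).trans hL
  rcases hB with h | h
  · simpa [h] using div_nonneg hℓ hq.le
  · simpa [h, abs_div, abs_of_pos hq] using div_le_div_of_nonneg_right hL hq.le

variable [IsProbabilityMeasure μ]

lemma abs_integral_le_of_abs_le {f : Ω → ℝ} {C : ℝ} (h : ∀ᵐ ω ∂μ, |f ω| ≤ C) :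
    |∫ ω, f ω ∂μ| ≤ C := by
  simpa using norm_integral_le_of_norm_le_const (μ := μ) (f := f) (C := C)
    (by simpa only [Real.norm_eq_abs] using h)

lemma IsBernoulli.integral_div_mul_sq_le (hB : IsBernoulli B q μ) (hq : 0 < q)
    (hLB : IndepFun L B μ) (hL : AEMeasurable L μ) (hLℓ : ∀ᵐ ω ∂μ, |L ω| ≤ ℓ) :
    ∫ ω, (L ω / q * B ω) ^ 2 ∂μ ≤ ℓ ^ 2 / q := by
  -- `B ^ 2 = B`, so the square is again a subsample, of `L ^ 2` with weight `q ^ 2`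
  have hsq : (fun ω ↦ (L ω / q * B ω) ^ 2) =ᵐ[μ] fun ω ↦ L ω ^ 2 * B ω / q ^ 2 := by
    filter_upwards [hB.ae_eq_zero_or_one] with ω h
    rcases h with h | h <;> simp [h, div_pow]
  have hL2 : ∫ ω, L ω ^ 2 ∂μ ≤ ℓ ^ 2 := by
    refine (le_abs_self _).trans (abs_integral_le_of_abs_le ?_)
    filter_upwards [hLℓ] with ω h
    simpa using pow_le_pow_left₀ (abs_nonneg _) h 2
  have hL2B : IndepFun (fun ω ↦ L ω ^ 2) B μ := hLB.comp (measurable_id.pow_const 2) measurable_id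
  rw [integral_congr_ae hsq, integral_div,
    hB.integral_mul_of_indepFun hq.le hL2B (hL.pow_const 2).aestronglyMeasurable, pow_two q,
    ← div_div, mul_div_cancel_right₀ _ hq.ne']
  gcongr

lemma IsBernoulli.integral_div_mul_sub_integral (hB : IsBernoulli B q μ) (hq : 0 < q)
    (hLB : IndepFun L B μ) (hL : AEMeasurable L μ) (hLℓ : ∀ᵐ ω ∂μ, |L ω| ≤ ℓ) :
    ∫ ω, (L ω / q * B ω - ∫ ω, L ω ∂μ) ∂μ = 0 := by
  have hZ_int : Integrable (fun ω ↦ L ω / q * B ω) μ :=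
    .of_bound ((hL.div_const q).mul hB.measurable.aemeasurable).aestronglyMeasurable (ℓ / q)
      (by simpa only [Real.norm_eq_abs] using abs_div_mul_le hB.ae_eq_zero_or_one hq hLℓ)
  rw [integral_sub hZ_int (integrable_const _), hB.integral_div_mul hq hLB hL]
  simp

lemma IsBernoulli.integral_div_mul_sub_integral_sq_le (hB : IsBernoulli B q μ) (hq : 0 < q)
    (hLB : IndepFun L B μ) (hL : AEMeasurable L μ) (hLℓ : ∀ᵐ ω ∂μ, |L ω| ≤ ℓ) :
    ∫ ω, (L ω / q * B ω - ∫ ω, L ω ∂μ) ^ 2 ∂μ ≤ ℓ ^ 2 / q := by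
  have hZ : AEMeasurable (fun ω ↦ L ω / q * B ω) μ :=
    (hL.div_const q).mul hB.measurable.aemeasurable
  have hvar := variance_le_expectation_sq hZ.aestronglyMeasurable
  rw [variance_eq_integral hZ, hB.integral_div_mul hq hLB hL] at hvar
  exact hvar.trans (hB.integral_div_mul_sq_le hq hLB hL hLℓ)

lemma IsBernoulli.abs_div_mul_sub_integral_le (hB : IsBernoulli B q μ) (hq : 0 < q)
    (hLℓ : ∀ᵐ ω ∂μ, |L ω| ≤ ℓ) : ∀ᵐ ω ∂μ, |L ω / q * B ω - ∫ ω, L ω ∂μ| ≤ 2 * ℓ / q := by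
  have hq1 : q ≤ 1 := ENNReal.ofReal_le_one.mp (hB.measure_eq_one ▸ prob_le_one)
  have hmean : |∫ ω, L ω ∂μ| ≤ ℓ := abs_integral_le_of_abs_le hLℓ
  filter_upwards [abs_div_mul_le hB.ae_eq_zero_or_one hq hLℓ] with ω hZ
  have hℓ : ℓ ≤ ℓ / q := le_div_self ((abs_nonneg _).trans hmean) hq hq1
  calc |L ω / q * B ω - ∫ ω, L ω ∂μ| ≤ ℓ / q + ℓ := (abs_sub _ _).trans (add_le_add hZ hmean)
    _ ≤ ℓ / q + ℓ / q := add_le_add_right hℓ _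
    _ = 2 * ℓ / q := by ring

end Subsample

section Bernstein

variable [IsProbabilityMeasure μ]

lemma mgf_le_exp_mul_sq_of_abs_le {X : Ω → ℝ} {M v t : ℝ} (hX : AEMeasurable X μ)
    (hXM : ∀ᵐ ω ∂μ, |X ω| ≤ M) (hmean : ∫ ω, X ω ∂μ = 0) (hvar : ∫ ω, X ω ^ 2 ∂μ ≤ v)
    (ht : |t| * M ≤ 1) :
    mgf X μ t ≤ exp (v * t ^ 2) := by
  have hX_int : Integrable X μ := .of_bound hX.aestronglyMeasurable M (by simpa using hXM)
  have hX2_int : Integrable (fun ω ↦ X ω ^ 2) μ :=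
    .of_bound (hX.pow_const 2).aestronglyMeasurable (M ^ 2) <| by
      filter_upwards [hXM] with ω hω
      simpa using pow_le_pow_left₀ (abs_nonneg _) hω 2
  have hexp_int : Integrable (fun ω ↦ exp (t * X ω)) μ :=
    integrable_exp_mul_of_mem_Icc hX (a := -M) (b := M) <| by
      filter_upwards [hXM] with ω hω using abs_le.mp hω
  have hquad : ∀ᵐ ω ∂μ, exp (t * X ω) ≤ 1 + t * X ω + t ^ 2 * X ω ^ 2 := by
    filter_upwards [hXM] with ω hω
    have htX : |t * X ω| ≤ 1 := by
      rw [abs_mul]; exact (mul_le_mul_of_nonneg_left hω (abs_nonneg t)).trans ht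
    have := (abs_le.mp (abs_exp_sub_one_sub_id_le htX)).2
    linarith [mul_pow t (X ω) 2]
  have hlin_int : Integrable (fun ω ↦ 1 + t * X ω) μ :=
    (integrable_const 1).add (hX_int.const_mul t)
  calc mgf X μ t ≤ ∫ ω, (1 + t * X ω + t ^ 2 * X ω ^ 2) ∂μ :=
        integral_mono_ae hexp_int (hlin_int.add (hX2_int.const_mul _)) hquad
    _ = 1 + t ^ 2 * ∫ ω, X ω ^ 2 ∂μ := by
        rw [integral_add hlin_int (hX2_int.const_mul _),
          integral_add (integrable_const 1) (hX_int.const_mul t), integral_const_mul,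
          integral_const_mul, hmean]
        simp
    _ ≤ 1 + v * t ^ 2 := by nlinarith [sq_nonneg t]
    _ ≤ exp (v * t ^ 2) := by linarith [add_one_le_exp (v * t ^ 2)]

variable {ι : Type*} {X : ι → Ω → ℝ} {M v : ℝ}

lemma measureReal_sum_ge_le_of_abs_le (hindep : iIndepFun X μ) (hX : ∀ i, Measurable (X i))
    (hXM : ∀ i, ∀ᵐ ω ∂μ, |X i ω| ≤ M) (hmean : ∀ i, ∫ ω, X i ω ∂μ = 0)
    (hvar : ∀ i, ∫ ω, X i ω ^ 2 ∂μ ≤ v) (s : Finset ι) (ε : ℝ) {t : ℝ} (ht : 0 ≤ t)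
    (htM : t * M ≤ 1) :
    μ.real {ω | ε ≤ ∑ i ∈ s, X i ω} ≤ exp (-t * ε + #s * v * t ^ 2) := by
  have hmgf : mgf (∑ i ∈ s, X i) μ t ≤ exp (#s * v * t ^ 2) := by
    rw [hindep.mgf_sum hX]
    calc ∏ i ∈ s, mgf (X i) μ t ≤ ∏ _i ∈ s, exp (v * t ^ 2) :=
          prod_le_prod (fun _ _ ↦ mgf_nonneg) fun i _ ↦ mgf_le_exp_mul_sq_of_abs_le
            (hX i).aemeasurable (hXM i) (hmean i) (hvar i) (by rwa [abs_of_nonneg ht])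
      _ = exp (#s * v * t ^ 2) := by rw [prod_const, ← exp_nat_mul, mul_assoc]
  have hint : Integrable (fun ω ↦ exp (t * (∑ i ∈ s, X i) ω)) μ :=
    hindep.integrable_exp_mul_sum hX fun i _ ↦ integrable_exp_mul_of_mem_Icc (hX i).aemeasurable
      (a := -M) (b := M) (by filter_upwards [hXM i] with ω hω using abs_le.mp hω)
  calc μ.real {ω | ε ≤ ∑ i ∈ s, X i ω}
      = μ.real {ω | ε ≤ (∑ i ∈ s, X i) ω} := by simp only [Finset.sum_apply]
    _ ≤ exp (-t * ε) * mgf (∑ i ∈ s, X i) μ t := measure_ge_le_exp_mul_mgf ε ht hint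
    _ ≤ exp (-t * ε) * exp (#s * v * t ^ 2) := by gcongr
    _ = exp (-t * ε + #s * v * t ^ 2) := (exp_add _ _).symm

lemma measureReal_abs_sum_ge_le_of_abs_le (hindep : iIndepFun X μ) (hX : ∀ i, Measurable (X i))
    (hXM : ∀ i, ∀ᵐ ω ∂μ, |X i ω| ≤ M) (hmean : ∀ i, ∫ ω, X i ω ∂μ = 0)
    (hvar : ∀ i, ∫ ω, X i ω ^ 2 ∂μ ≤ v) (s : Finset ι) (ε : ℝ) {t : ℝ} (ht : 0 ≤ t)
    (htM : t * M ≤ 1) :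
    μ.real {ω | ε ≤ |∑ i ∈ s, X i ω|} ≤ 2 * exp (-t * ε + #s * v * t ^ 2) := by
  have hneg := measureReal_sum_ge_le_of_abs_le (X := fun i ω ↦ -X i ω)
    (hindep.comp (fun _ ↦ Neg.neg) fun _ ↦ measurable_neg) (fun i ↦ (hX i).neg)
    (by simpa only [abs_neg] using hXM) (by simpa [integral_neg] using hmean)
    (by simpa only [neg_sq] using hvar) s ε ht htM
  have hsplit : {ω | ε ≤ |∑ i ∈ s, X i ω|}
      = {ω | ε ≤ ∑ i ∈ s, X i ω} ∪ {ω | ε ≤ ∑ i ∈ s, -X i ω} := by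
    ext ω; simp [le_abs', sum_neg_distrib, le_neg, or_comm]
  rw [hsplit, two_mul]
  exact (measureReal_union_le _ _).trans
    (add_le_add (measureReal_sum_ge_le_of_abs_le hindep hX hXM hmean hvar s ε ht htM) hneg)

lemma measureReal_abs_sum_ge_le_two_mul_exp (hindep : iIndepFun X μ)
    (hX : ∀ i, Measurable (X i)) (hXM : ∀ i, ∀ᵐ ω ∂μ, |X i ω| ≤ M)
    (hmean : ∀ i, ∫ ω, X i ω ∂μ = 0) (hvar : ∀ i, ∫ ω, X i ω ^ 2 ∂μ ≤ v) {s : Finset ι}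
    (hs : s.Nonempty) (hv : 0 < v) {ε : ℝ} (hε : 0 ≤ ε) (hεM : ε * M ≤ 2 * #s * v) :
    μ.real {ω | ε ≤ |∑ i ∈ s, X i ω|} ≤ 2 * exp (-ε ^ 2 / (4 * #s * v)) := by
  have hsv : 0 < 2 * #s * v := by have := hs.card_pos; positivity
  have htM : ε / (2 * #s * v) * M ≤ 1 := by rwa [div_mul_eq_mul_div, div_le_one hsv]
  convert measureReal_abs_sum_ge_le_of_abs_le hindep hX hXM hmean hvar s ε
    (div_nonneg hε hsv.le) htM using 3
  field_simp
  ring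

lemma measureReal_abs_sum_div_mul_sub_integral_ge_le {L B : ι → Ω → ℝ} {p : ι → ℝ}
    {ℓ pmin : ℝ}
    (hL : ∀ i, Measurable (L i)) (hℓ : ∀ i, ∀ᵐ ω ∂μ, |L i ω| ≤ ℓ)
    (hB : ∀ i, IsBernoulli (B i) (p i) μ)
    (hindep : iIndepFun (fun i ω ↦ (L i ω, B i ω)) μ) (hLB : ∀ i, IndepFun (L i) (B i) μ)
    (hpmin : 0 < pmin) (hp : ∀ i, pmin ≤ p i) {s : Finset ι} (hs : s.Nonempty) (hℓ_pos : 0 < ℓ)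
    {ε : ℝ} (hε : 0 ≤ ε) (hεℓ : ε ≤ #s * ℓ) :
    μ.real {ω | ε ≤ |∑ i ∈ s, (L i ω / p i * B i ω - ∫ ω, L i ω ∂μ)|}
      ≤ 2 * exp (-(pmin * ε ^ 2) / (4 * ℓ ^ 2 * #s)) := by
  have hp_pos (i : ι) : 0 < p i := hpmin.trans_le (hp i)
  have htail := measureReal_abs_sum_ge_le_two_mul_exp (M := 2 * ℓ / pmin) (v := ℓ ^ 2 / pmin)
    (hindep.comp (fun i q ↦ q.1 / p i * q.2 - ∫ ω, L i ω ∂μ) fun i ↦ by fun_prop)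
    (fun i ↦ ((hL i).div_const _).mul (hB i).measurable |>.sub_const _)
    (fun i ↦ ((hB i).abs_div_mul_sub_integral_le (hp_pos i) (hℓ i)).mono fun _ h ↦
      h.trans (div_le_div_of_nonneg_left (by positivity) hpmin (hp i)))
    (fun i ↦ (hB i).integral_div_mul_sub_integral (hp_pos i) (hLB i) (hL i).aemeasurable (hℓ i))
    (fun i ↦ ((hB i).integral_div_mul_sub_integral_sq_le (hp_pos i) (hLB i) (hL i).aemeasurable
      (hℓ i)).trans (div_le_div_of_nonneg_left (sq_nonneg ℓ) hpmin (hp i)))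
    hs (by positivity) hε <| by
      calc ε * (2 * ℓ / pmin) ≤ #s * ℓ * (2 * ℓ / pmin) := by gcongr
        _ = 2 * #s * (ℓ ^ 2 / pmin) := by ring
  refine htail.trans_eq ?_
  congr 2
  field_simp

end Bernstein

end ProbabilityTheory

lemma two_mul_exp_neg_div_four_le {a b : ℝ} (ha : 0 ≤ a) (hb : 0 < b) :
    2 * exp (-a / (4 * b)) ≤ 4 * exp (-a / (5 * b)) := by
  gcongr ?_ * exp ?_
  · norm_num
  · rw [neg_div, neg_div, neg_le_neg_iff]
    exact div_le_div_of_nonneg_left ha (by positivity) (by linarith)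

/-- Concentration for sums of independently "sub-sampled" bounded random variables:
if `|L i| ≤ ℓ`, `Z i = (L i / p i) · B i` with `B i ~ Bernoulli (p i)` independent of
`L i`, the pairs `(L i, B i)` are mutually independent, `μL = E[∑ L i] > 0`,
`pmin = min_i p i`, and `Γ = (∑ Z i)/μL − 1`, then for every `γ ∈ [0,1]`,
`Pr[|Γ| ≥ γ] ≤ 4 exp(− pmin μL² γ² / (5 ℓ² n))`. -/
theorem subsampled_sum_concentration
    {Ω : Type*} {mΩ : MeasurableSpace Ω} (μ : Measure Ω) [IsProbabilityMeasure μ]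
    (n : ℕ) (L B : Fin n → Ω → ℝ) (p : Fin n → ℝ) (ℓ : ℝ)
    (hmeasL : ∀ i, Measurable (L i)) (hmeasB : ∀ i, Measurable (B i))
    (hp : ∀ i, 0 < p i)
    (hℓ : ∀ i, ∀ᵐ ω ∂μ, |L i ω| ≤ ℓ)
    (hB01 : ∀ i, ∀ᵐ ω ∂μ, B i ω = 0 ∨ B i ω = 1)
    (hBp : ∀ i, μ {ω | B i ω = 1} = ENNReal.ofReal (p i))
    (hindep : iIndepFun
      (fun i ω => (L i ω, B i ω)) μ)
    (hLB : ∀ i, IndepFun (L i) (B i) μ)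
    (pmin μL : ℝ)
    (hpmin : IsLeast (Set.range p) pmin)
    (hμL : μL = ∫ ω, ∑ i, L i ω ∂μ) (hμLpos : 0 < μL)
    (γ : ℝ) (hγ : γ ∈ Set.Icc (0:ℝ) 1) :
    μ {ω | γ ≤ |(∑ i, (L i ω / p i) * B i ω) / μL - 1|} ≤
      ENNReal.ofReal (4 * Real.exp (-(pmin * μL ^ 2 * γ ^ 2) / (5 * ℓ ^ 2 * n))) := by
  obtain ⟨hγ0, hγ1⟩ := hγ
  obtain ⟨⟨i₀, hi₀⟩, hpmin_le⟩ := hpmin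
  have hpmin_pos : 0 < pmin := hi₀ ▸ hp i₀
  have hp_ge (i : Fin n) : pmin ≤ p i := hpmin_le ⟨i, rfl⟩
  have hL_int (i : Fin n) : Integrable (L i) μ :=
    .of_bound (hmeasL i).aestronglyMeasurable ℓ (by simpa only [Real.norm_eq_abs] using hℓ i)
  have hμL_sum : μL = ∑ i, ∫ ω, L i ω ∂μ := by rw [hμL, integral_finsetSum _ fun i _ ↦ hL_int i]
  have hμL_le : μL ≤ n * ℓ := by
    simpa [hμL_sum] using sum_le_sum (s := univ) fun i _ ↦
      (le_abs_self _).trans (abs_integral_le_of_abs_le (hℓ i))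
  obtain ⟨hn, hℓ_pos⟩ : (0 : ℝ) < n ∧ 0 < ℓ :=
    (pos_and_pos_or_neg_and_neg_of_mul_pos (hμLpos.trans_le hμL_le)).resolve_right
      fun h ↦ h.1.not_ge n.cast_nonneg
  have hevent : {ω | γ ≤ |(∑ i, (L i ω / p i) * B i ω) / μL - 1|}
      = {ω | γ * μL ≤ |∑ i, (L i ω / p i * B i ω - ∫ ω, L i ω ∂μ)|} := by
    ext ω
    rw [Set.mem_ofPred_eq, Set.mem_ofPred_eq, sum_sub_distrib, ← hμL_sum,
      div_sub_one hμLpos.ne', abs_div, abs_of_pos hμLpos, le_div_iff₀ hμLpos]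
  have htail := measureReal_abs_sum_div_mul_sub_integral_ge_le hmeasL hℓ
    (fun i ↦ ⟨hmeasB i, hB01 i, hBp i⟩) hindep hLB hpmin_pos hp_ge
    (univ_nonempty_iff.mpr ⟨⟨0, by exact_mod_cast hn⟩⟩) hℓ_pos (mul_nonneg hγ0 hμLpos.le)
    (by rw [card_fin]; nlinarith)
  rw [card_fin] at htail
  rw [hevent, ← ofReal_measureReal]
  refine ENNReal.ofReal_le_ofReal <| htail.trans_eq ?_ |>.trans <|
    (two_mul_exp_neg_div_four_le (a := pmin * μL ^ 2 * γ ^ 2) (b := ℓ ^ 2 * n)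
      (by positivity) (by positivity)).trans_eq ?_ <;> ring_nf
end

section
/- Let Y_0 = 1, Y_1, ..., Y_n be a nonnegative martingale with respect to X_0, ..., X_n. Define R_i = Y_i/Y_{i-1} − 1 (set R_i = 0 when Y_{i-1} = Y_i = 0). Then for every λ ∈ (0, 1/4], Pr[∃ i ∈ [n] such that |Y_i − 1| ≥ λ] ≤ 23 · E[Σ_{i=1}^n min{|R_i|, R_i²}] / λ². -/
/-!
The Huber function `huber l t` (equal to `t²` for `|t| ≤ l` and to `2l|t| - l²` beyond) is the
supremum over `|c| ≤ l` of the tangents `t ↦ 2ct - c²` of `t²`, attained at `c = clip l t`. Hence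
along a martingale `Z` the potential `E huber(Z_k - 1)` grows in one step by at most
`2 E min(ΔZ², 2l|ΔZ|)`, since the linear term `2 clip(Z_k - 1) ΔZ` has mean zero.

Apply this to `Y` stopped when `|Y - 1|` first reaches `λ`. Before stopping, `ΔZ = Y_k R_{k+1}` with
`|Y_k - 1| < λ ≤ 1/4`, so a step costs at most `4 E min(|R|, R²)`, while on the event in question
the final potential is at least `λ²`. The `R_i` are integrable because `E[Y_j / Y_i] ≤ 1`.
-/

open MeasureTheory Finset
open scoped ENNReal

noncomputable def clip (l t : ℝ) : ℝ := max (-l) (min l t)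

noncomputable def huber (l t : ℝ) : ℝ := 2 * clip l t * t - clip l t ^ 2

section Huber

variable {l : ℝ}

lemma abs_clip_le (hl : 0 ≤ l) (t : ℝ) : |clip l t| ≤ l := by
  unfold clip; rw [abs_le]; constructor <;> grind

lemma continuous_clip (l : ℝ) : Continuous (clip l) := by
  unfold clip; fun_prop

lemma two_mul_mul_sub_sq_le_huber {c : ℝ} (hc : |c| ≤ l) (t : ℝ) :
    2 * c * t - c ^ 2 ≤ huber l t := by
  rw [abs_le] at hc
  unfold huber clip
  rcases le_total t (-l) with h | h
  · rw [min_eq_right (by linarith), max_eq_left h]; nlinarith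
  rcases le_total t l with h' | h'
  · rw [min_eq_right h', max_eq_right h]; nlinarith [sq_nonneg (t - c)]
  · rw [min_eq_left h', max_eq_right (by linarith)]; nlinarith

lemma huber_nonneg (hl : 0 ≤ l) (t : ℝ) : 0 ≤ huber l t := by
  simpa using two_mul_mul_sub_sq_le_huber (c := 0) (by simpa using hl) t

lemma huber_zero (hl : 0 ≤ l) : huber l 0 = 0 := by
  simp [huber, clip, hl]

lemma sq_le_huber (hl : 0 ≤ l) {t : ℝ} (h : l ≤ |t|) : l ^ 2 ≤ huber l t := by
  rcases le_total 0 t with ht | ht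
  · rw [abs_of_nonneg ht] at h
    have := two_mul_mul_sub_sq_le_huber (c := l) (abs_of_nonneg hl).le t
    nlinarith [mul_nonneg hl (sub_nonneg.2 h)]
  · rw [abs_of_nonpos ht] at h
    have := two_mul_mul_sub_sq_le_huber (c := -l) (by rw [abs_neg, abs_of_nonneg hl]) t
    nlinarith [mul_nonneg hl (sub_nonneg.2 h)]

lemma huber_le (hl : 0 ≤ l) (t : ℝ) : huber l t ≤ 2 * l * |t| := by
  calc huber l t ≤ 2 * (|clip l t| * |t|) := by
        unfold huber
        nlinarith [le_abs_self (clip l t * t), abs_mul (clip l t) t, sq_nonneg (clip l t)]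
    _ ≤ 2 * l * |t| := by nlinarith [abs_clip_le hl t, abs_nonneg t]

lemma continuous_huber (l : ℝ) : Continuous (huber l) :=
  ((continuous_const.mul (continuous_clip l)).mul continuous_id).sub ((continuous_clip l).pow 2)

lemma clip_sub_mul_le (hl : 0 ≤ l) (a b : ℝ) :
    (clip l b - clip l a) * (b - a) ≤ min ((b - a) ^ 2) (2 * l * |b - a|) := by
  have hlip : |clip l b - clip l a| ≤ |b - a| := by
    unfold clip
    rw [max_comm, max_comm (-l)]
    exact (abs_max_sub_max_le_abs _ _ _).trans (by simpa using abs_min_sub_min_le_max l b l a)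
  have hbdd : |clip l b - clip l a| ≤ 2 * l := by
    have := abs_clip_le hl a; have := abs_clip_le hl b
    rw [abs_le] at *; constructor <;> linarith
  have hprod : (clip l b - clip l a) * (b - a) ≤ |clip l b - clip l a| * |b - a| := by
    rw [← abs_mul]; exact le_abs_self _
  refine le_min ?_ ?_
  · nlinarith [abs_nonneg (b - a), sq_abs (b - a)]
  · nlinarith [abs_nonneg (b - a)]

lemma huber_le_add (hl : 0 ≤ l) (a b : ℝ) :
    huber l b ≤ huber l a + 2 * clip l a * (b - a) + 2 * min ((b - a) ^ 2) (2 * l * |b - a|) := by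
  have h := two_mul_mul_sub_sq_le_huber (abs_clip_le hl b) a
  have := clip_sub_mul_le hl a b
  unfold huber at *
  nlinarith

end Huber

noncomputable def relChange (x y : ℝ) : ℝ := if x = 0 ∧ y = 0 then 0 else y / x - 1

lemma relChange_of_ne_zero {x : ℝ} (hx : x ≠ 0) (y : ℝ) : relChange x y = y / x - 1 := by
  simp [relChange, hx]

lemma abs_relChange_le {x y : ℝ} (hx : 0 ≤ x) (hy : 0 ≤ y) : |relChange x y| ≤ y / x + 1 := by
  unfold relChange
  split_ifs
  · simp; positivity
  · exact (abs_sub _ _).trans (by rw [abs_of_nonneg (div_nonneg hy hx), abs_one])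

lemma Measurable.relChange {Ω : Type*} {mΩ : MeasurableSpace Ω} {f g : Ω → ℝ}
    (hf : Measurable f) (hg : Measurable g) : Measurable fun ω ↦ relChange (f ω) (g ω) :=
  Measurable.ite ((hf (measurableSet_singleton 0)).inter (hg (measurableSet_singleton 0)))
    measurable_const ((hg.div hf).sub_const 1)

lemma min_sq_abs_sub_le_relChange {l x : ℝ} (hl : l ≤ 1 / 4) (hx : |x - 1| < l) (y : ℝ) :
    min ((y - x) ^ 2) (2 * l * |y - x|) ≤ 2 * min |relChange x y| (relChange x y ^ 2) := by
  obtain ⟨hx₁, hx₂⟩ := abs_lt.mp hx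
  have hx0 : 0 < x := by linarith
  have hyx : y - x = x * relChange x y := by
    rw [relChange_of_ne_zero hx0.ne']; field_simp
  rw [hyx, mul_min_of_nonneg _ _ zero_le_two, abs_mul, abs_of_pos hx0]
  refine le_min ((min_le_right _ _).trans ?_) ((min_le_left _ _).trans ?_)
  · have hlx : l * x ≤ 1 := by nlinarith [abs_nonneg (x - 1)]
    nlinarith [mul_le_mul_of_nonneg_right hlx (abs_nonneg (relChange x y))]
  · have hx2 : x ^ 2 ≤ 2 := by nlinarith [abs_nonneg (x - 1)]
    nlinarith [mul_le_mul_of_nonneg_right hx2 (sq_nonneg (relChange x y))]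

namespace MeasureTheory

lemma Integrable.min_abs_sq {Ω : Type*} {mΩ : MeasurableSpace Ω} {μ : Measure Ω}
    {r : Ω → ℝ} (hr : Integrable r μ) : Integrable (fun ω ↦ min |r ω| (r ω ^ 2)) μ := by
  refine hr.abs.mono ((continuous_abs.min (continuous_pow 2)).comp_aestronglyMeasurable
    hr.aestronglyMeasurable) (.of_forall fun ω ↦ ?_)
  rw [Real.norm_of_nonneg (le_min (abs_nonneg _) (sq_nonneg _)), norm_abs_eq_norm]
  exact min_le_left _ _

lemma Integrable.huber_sub {Ω : Type*} {mΩ : MeasurableSpace Ω} {μ : Measure Ω}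
    [IsFiniteMeasure μ] {l : ℝ} (hl : 0 ≤ l) {g : Ω → ℝ} (hg : Integrable g μ) (a : ℝ) :
    Integrable (fun ω ↦ huber l (g ω - a)) μ := by
  refine ((hg.sub (integrable_const a)).abs.const_mul (2 * l)).mono' ((continuous_huber l)
    |>.comp_aestronglyMeasurable (hg.aestronglyMeasurable.sub aestronglyMeasurable_const))
    (.of_forall fun ω ↦ ?_)
  rw [Real.norm_of_nonneg (huber_nonneg hl _)]
  exact huber_le hl _

lemma lintegral_mul_eq_of_forall_setLIntegral_eq {Ω : Type*} {m m₀ : MeasurableSpace Ω}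
    {μ : Measure[m₀] Ω} (hm : m ≤ m₀) {f f' g : Ω → ℝ≥0∞} (hf : Measurable f)
    (hf' : Measurable f') (hg : Measurable[m] g)
    (h : ∀ s, MeasurableSet[m] s → ∫⁻ x in s, f x ∂μ = ∫⁻ x in s, f' x ∂μ) :
    ∫⁻ x, g x * f x ∂μ = ∫⁻ x, g x * f' x ∂μ := by
  have htrim : (μ.withDensity f).trim hm = (μ.withDensity f').trim hm := by
    refine @Measure.ext _ m _ _ fun s hs ↦ ?_
    rw [trim_measurableSet_eq hm hs, trim_measurableSet_eq hm hs, withDensity_apply _ (hm s hs),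
      withDensity_apply _ (hm s hs), h s hs]
  simp_rw [mul_comm (g _)]
  change ∫⁻ x, (f * g) x ∂μ = ∫⁻ x, (f' * g) x ∂μ
  rw [← lintegral_withDensity_eq_lintegral_mul _ hf (hg.mono hm le_rfl),
    ← lintegral_withDensity_eq_lintegral_mul _ hf' (hg.mono hm le_rfl),
    ← lintegral_trim hm hg, htrim, lintegral_trim hm hg]

section Stopping

variable {Ω β : Type*} {u : ℕ → Ω → β} {s : Set β}

lemma stoppedProcess_hittingAfter_succ (k : ℕ) (ω : Ω) :
    stoppedProcess u (hittingAfter u s 0) (k + 1) ω = stoppedProcess u (hittingAfter u s 0) k ω ∨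
      stoppedProcess u (hittingAfter u s 0) k ω = u k ω ∧
        stoppedProcess u (hittingAfter u s 0) (k + 1) ω = u (k + 1) ω ∧ u k ω ∉ s := by
  rcases lt_or_ge (k : ℕ∞) (hittingAfter u s 0 ω) with hk | hk
  · refine Or.inr ⟨stoppedProcess_eq_of_le (i := k) hk.le,
      stoppedProcess_eq_of_le (i := k + 1) ?_, notMem_of_lt_hittingAfter hk k.zero_le⟩
    exact_mod_cast Order.add_one_le_of_lt hk
  · left
    rw [stoppedProcess_eq_of_ge (i := k) hk,
      stoppedProcess_eq_of_ge (i := k + 1) (hk.trans (WithTop.coe_le_coe.2 k.le_succ))]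

lemma stoppedProcess_hittingAfter_mem {n : ℕ} {ω : Ω} (h : ∃ j ≤ n, u j ω ∈ s) :
    stoppedProcess u (hittingAfter u s 0) n ω ∈ s := by
  obtain ⟨j, hjn, hj⟩ := h
  have hle : hittingAfter u s 0 ω ≤ n :=
    (hittingAfter_le_of_mem j.zero_le hj).trans (WithTop.coe_le_coe.2 hjn)
  rw [stoppedProcess_eq_of_ge (i := n) hle]
  exact hittingAfter_mem_set ⟨j, j.zero_le, hj⟩

lemma min_sq_stoppedProcess_succ_sub_le {Y : ℕ → Ω → ℝ} {l : ℝ} (hl : l ≤ 1 / 4)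
    (k : ℕ) (ω : Ω) :
    let Z := stoppedProcess Y (hittingAfter Y {x | l ≤ |x - 1|} 0)
    min ((Z (k + 1) ω - Z k ω) ^ 2) (2 * l * |Z (k + 1) ω - Z k ω|) ≤
      2 * min |relChange (Y k ω) (Y (k + 1) ω)| (relChange (Y k ω) (Y (k + 1) ω) ^ 2) := by
  intro Z
  rcases stoppedProcess_hittingAfter_succ k ω with h | ⟨hk, hk1, hks⟩
  · simp only [Z] at h ⊢
    rw [h, sub_self]
    simp only [ne_eq, OfNat.ofNat_ne_zero, not_false_eq_true, zero_pow, abs_zero, mul_zero,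
      min_self]
    positivity
  · simp only [Z] at hk hk1 ⊢
    rw [hk, hk1]
    exact min_sq_abs_sub_le_relChange hl (not_le.1 hks) _

end Stopping

namespace Martingale

variable {Ω : Type*} {mΩ : MeasurableSpace Ω} {μ : Measure Ω} [IsFiniteMeasure μ]
  {ℱ : Filtration ℕ mΩ} {f : ℕ → Ω → ℝ}

protected lemma stoppedProcess (hf : Martingale f ℱ μ) {τ : Ω → ℕ∞} (hτ : IsStoppingTime ℱ τ) :
    Martingale (stoppedProcess f τ) ℱ μ :=
  have hneg : stoppedProcess (-f) τ = -(stoppedProcess f τ) := rfl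
  martingale_iff.2 ⟨by simpa [hneg] using (hf.neg.submartingale.stoppedProcess hτ).neg,
    hf.submartingale.stoppedProcess hτ⟩

lemma stoppedProcess_hittingAfter (hf : Martingale f ℱ μ) {s : Set ℝ} (hs : MeasurableSet s) :
    Martingale (stoppedProcess f (hittingAfter f s 0)) ℱ μ :=
  hf.stoppedProcess (hf.stronglyAdapted.adapted.isStoppingTime_hittingAfter hs)

lemma integral_mul_eq (hf : Martingale f ℱ μ) {i j : ℕ} (hij : i ≤ j) {G : Ω → ℝ}
    (hG : StronglyMeasurable[ℱ i] G) {C : ℝ} (hGC : ∀ ω, |G ω| ≤ C) :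
    ∫ ω, G ω * f j ω ∂μ = ∫ ω, G ω * f i ω ∂μ := by
  have hpull := condExp_stronglyMeasurable_mul_of_bound (ℱ.le i) hG (hf.integrable j) C
    (.of_forall hGC)
  calc ∫ ω, G ω * f j ω ∂μ = ∫ ω, (μ[G * f j | ℱ i]) ω ∂μ := (integral_condExp (ℱ.le i)).symm
    _ = ∫ ω, G ω * f i ω ∂μ := by
      refine integral_congr_ae ?_
      filter_upwards [hpull, hf.condExp_ae_eq hij] with ω h1 h2
      rw [h1, Pi.mul_apply, h2]

lemma lintegral_mul_ofReal_eq (hf : Martingale f ℱ μ) (hnn : ∀ i ω, 0 ≤ f i ω) {i j : ℕ}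
    (hij : i ≤ j) {g : Ω → ℝ≥0∞} (hg : Measurable[ℱ i] g) :
    ∫⁻ ω, g ω * ENNReal.ofReal (f j ω) ∂μ = ∫⁻ ω, g ω * ENNReal.ofReal (f i ω) ∂μ := by
  have hm k : Measurable (f k) := ((hf.stronglyMeasurable k).mono (ℱ.le k)).measurable
  refine lintegral_mul_eq_of_forall_setLIntegral_eq (ℱ.le i) (hm j).ennreal_ofReal
    (hm i).ennreal_ofReal hg fun s hs ↦ ?_
  rw [← ofReal_integral_eq_lintegral_ofReal (hf.integrable j).integrableOn
      (.of_forall (hnn j)), ← ofReal_integral_eq_lintegral_ofReal (hf.integrable i).integrableOn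
      (.of_forall (hnn i)), hf.setIntegral_eq hij hs]

lemma integrable_div (hf : Martingale f ℱ μ) (hnn : ∀ i ω, 0 ≤ f i ω) {i j : ℕ} (hij : i ≤ j) :
    Integrable (fun ω ↦ f j ω / f i ω) μ := by
  have hm k : Measurable (f k) := ((hf.stronglyMeasurable k).mono (ℱ.le k)).measurable
  refine ⟨((hm j).div (hm i)).aestronglyMeasurable, ?_⟩
  rw [hasFiniteIntegral_iff_ofReal (.of_forall fun ω ↦ div_nonneg (hnn j ω) (hnn i ω))]
  calc ∫⁻ ω, ENNReal.ofReal (f j ω / f i ω) ∂μ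
      = ∫⁻ ω, ENNReal.ofReal (f i ω)⁻¹ * ENNReal.ofReal (f j ω) ∂μ := by
        simp_rw [div_eq_inv_mul, ENNReal.ofReal_mul (inv_nonneg.2 (hnn i _))]
    _ = ∫⁻ ω, ENNReal.ofReal (f i ω)⁻¹ * ENNReal.ofReal (f i ω) ∂μ :=
        hf.lintegral_mul_ofReal_eq hnn hij (hf.stronglyMeasurable i).measurable.inv.ennreal_ofReal
    _ ≤ ∫⁻ _, 1 ∂μ := by
        refine lintegral_mono fun ω ↦ ?_
        rw [← ENNReal.ofReal_mul (inv_nonneg.2 (hnn i ω)), ENNReal.ofReal_le_one]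
        rcases eq_or_ne (f i ω) 0 with h | h <;> simp [h]
    _ < ∞ := by simp

lemma integrable_relChange (hf : Martingale f ℱ μ) (hnn : ∀ i ω, 0 ≤ f i ω) {i j : ℕ}
    (hij : i ≤ j) : Integrable (fun ω ↦ relChange (f i ω) (f j ω)) μ := by
  have hm k : Measurable (f k) := ((hf.stronglyMeasurable k).mono (ℱ.le k)).measurable
  exact ((hf.integrable_div hnn hij).add (integrable_const 1)).mono'
    ((hm i).relChange (hm j)).aestronglyMeasurable
    (.of_forall fun ω ↦ abs_relChange_le (hnn i ω) (hnn j ω))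

variable {l : ℝ}

lemma integral_huber_succ_le (hf : Martingale f ℱ μ) (hl : 0 ≤ l) (a : ℝ) (k : ℕ)
    {B : Ω → ℝ} (hB : Integrable B μ)
    (hfB : ∀ ω, min ((f (k + 1) ω - f k ω) ^ 2) (2 * l * |f (k + 1) ω - f k ω|) ≤ B ω) :
    ∫ ω, huber l (f (k + 1) ω - a) ∂μ ≤ ∫ ω, huber l (f k ω - a) ∂μ + 2 * ∫ ω, B ω ∂μ := by
  set G : Ω → ℝ := fun ω ↦ 2 * clip l (f k ω - a)
  have hGm : StronglyMeasurable[ℱ k] G :=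
    (continuous_const.mul (continuous_clip l)).comp_stronglyMeasurable
      ((hf.stronglyMeasurable k).sub stronglyMeasurable_const)
  have hGb ω : |G ω| ≤ 2 * l := by
    simpa [G, abs_mul] using abs_clip_le hl (f k ω - a)
  have hGf i : Integrable (fun ω ↦ G ω * f i ω) μ :=
    (hf.integrable i).bdd_mul (hGm.mono (ℱ.le k)).aestronglyMeasurable (.of_forall hGb)
  have hpt ω : huber l (f (k + 1) ω - a) ≤
      huber l (f k ω - a) + (G ω * f (k + 1) ω - G ω * f k ω) + 2 * B ω := by
    have := huber_le_add hl (f k ω - a) (f (k + 1) ω - a)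
    have := hfB ω
    simp only [G, sub_sub_sub_cancel_right] at *
    linarith
  have hhub : Integrable (fun ω ↦ huber l (f k ω - a)) μ := (hf.integrable k).huber_sub hl a
  have hmart : Integrable (fun ω ↦ G ω * f (k + 1) ω - G ω * f k ω) μ := (hGf _).sub (hGf _)
  have hmart_zero : ∫ ω, G ω * f (k + 1) ω - G ω * f k ω ∂μ = 0 := by
    rw [integral_sub (hGf _) (hGf _), hf.integral_mul_eq k.le_succ hGm hGb, sub_self]
  have hsum : Integrable (fun ω ↦ huber l (f k ω - a) + (G ω * f (k + 1) ω - G ω * f k ω)) μ :=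
    hhub.add hmart
  calc ∫ ω, huber l (f (k + 1) ω - a) ∂μ
      ≤ ∫ ω, huber l (f k ω - a) + (G ω * f (k + 1) ω - G ω * f k ω) + 2 * B ω ∂μ :=
        integral_mono ((hf.integrable _).huber_sub hl a) (hsum.add (hB.const_mul 2)) hpt
    _ = ∫ ω, huber l (f k ω - a) ∂μ + 2 * ∫ ω, B ω ∂μ := by
        rw [integral_add hsum (hB.const_mul 2), integral_add hhub hmart, hmart_zero,
          integral_const_mul, add_zero]

lemma integral_huber_le_sum (hf : Martingale f ℱ μ) (hl : 0 ≤ l) (a : ℝ) (n : ℕ)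
    {B : ℕ → Ω → ℝ} (hB : ∀ k < n, Integrable (B (k + 1)) μ)
    (hfB : ∀ k < n, ∀ ω,
      min ((f (k + 1) ω - f k ω) ^ 2) (2 * l * |f (k + 1) ω - f k ω|) ≤ B (k + 1) ω) :
    ∫ ω, huber l (f n ω - a) ∂μ ≤
      ∫ ω, huber l (f 0 ω - a) ∂μ + 2 * ∑ i ∈ Icc 1 n, ∫ ω, B i ω ∂μ := by
  induction n with
  | zero => simp
  | succ n ih =>
    rw [sum_Icc_succ_top (by omega), mul_add, ← add_assoc]
    exact (hf.integral_huber_succ_le hl a n (hB n n.lt_succ_self) (hfB n n.lt_succ_self)).trans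
      (by gcongr; exact ih (fun k hk ↦ hB k (by omega)) (fun k hk ↦ hfB k (by omega)))

lemma integral_huber_stoppedProcess_le (hf : Martingale f ℱ μ) (hnn : ∀ i ω, 0 ≤ f i ω)
    (hf0 : ∀ ω, f 0 ω = 1) (hl0 : 0 ≤ l) (hl : l ≤ 1 / 4) (n : ℕ) :
    ∫ ω, huber l (stoppedProcess f (hittingAfter f {x | l ≤ |x - 1|} 0) n ω - 1) ∂μ ≤
      4 * ∑ i ∈ Icc 1 n,
        ∫ ω, min |relChange (f (i - 1) ω) (f i ω)| (relChange (f (i - 1) ω) (f i ω) ^ 2) ∂μ := by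
  set Z := stoppedProcess f (hittingAfter f {x | l ≤ |x - 1|} 0)
  have hZ : Martingale Z ℱ μ := hf.stoppedProcess_hittingAfter
    (measurableSet_le measurable_const (measurable_id.sub_const 1).abs)
  have hZ0 ω : Z 0 ω = 1 := by
    rw [← hf0 ω]; exact stoppedProcess_eq_of_le (i := 0) bot_le
  calc ∫ ω, huber l (Z n ω - 1) ∂μ
      ≤ ∫ ω, huber l (Z 0 ω - 1) ∂μ + 2 * ∑ i ∈ Icc 1 n,
          ∫ ω, 2 * min |relChange (f (i - 1) ω) (f i ω)| (relChange (f (i - 1) ω) (f i ω) ^ 2) ∂μ :=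
        hZ.integral_huber_le_sum hl0 1 n
          (fun k _ ↦ ((hf.integrable_relChange hnn k.le_succ).min_abs_sq).const_mul 2)
          fun k _ ω ↦ by simpa using min_sq_stoppedProcess_succ_sub_le hl k ω
    _ = _ := by
        simp_rw [hZ0, sub_self, huber_zero hl0, integral_zero, zero_add, integral_const_mul,
          ← mul_sum]
        ring

lemma sq_mul_measureReal_le_integral_huber (hf : Martingale f ℱ μ) (hl : 0 ≤ l) (n : ℕ) :
    l ^ 2 * μ.real {ω | ∃ i ≤ n, l ≤ |f i ω - 1|} ≤
      ∫ ω, huber l (stoppedProcess f (hittingAfter f {x | l ≤ |x - 1|} 0) n ω - 1) ∂μ := by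
  have hZ := hf.stoppedProcess_hittingAfter (s := {x | l ≤ |x - 1|})
    (measurableSet_le measurable_const (measurable_id.sub_const 1).abs)
  refine (mul_le_mul_of_nonneg_left (measureReal_mono fun ω hω ↦ ?_) (sq_nonneg l)).trans
    (mul_meas_ge_le_integral_of_nonneg (.of_forall fun ω ↦ huber_nonneg hl _)
      ((hZ.integrable n).huber_sub hl 1) _)
  exact sq_le_huber hl (stoppedProcess_hittingAfter_mem (s := {x | l ≤ |x - 1|}) hω)

end Martingale

end MeasureTheory

/-- A bound on "slowly evolving" nonnegative martingales: if `Y₀ = 1`,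
`Y₀,…,Yₙ` is a nonnegative martingale (w.r.t. a filtration `ℱ`) and
`R i = Y i / Y (i-1) − 1` (set to `0` when `Y (i-1) = Y i = 0`), then for every
`λ ∈ (0, 1/4]`,
`Pr[∃ i ∈ [n], |Y i − 1| ≥ λ] ≤ 23 · E[∑_{i=1}^n min(|R i|, (R i)²)] / λ²`. -/
theorem martingale_slowly_evolving_bound
    {Ω : Type*} {mΩ : MeasurableSpace Ω} (μ : Measure Ω) [IsProbabilityMeasure μ]
    (ℱ : Filtration ℕ mΩ) (n : ℕ) (Y : ℕ → Ω → ℝ)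
    (hY : Martingale Y ℱ μ)
    (h0 : ∀ ω, Y 0 ω = 1) (hpos : ∀ i ω, 0 ≤ Y i ω)
    (R : ℕ → Ω → ℝ)
    (hR : ∀ i ω, R i ω =
      if Y (i - 1) ω = 0 ∧ Y i ω = 0 then 0 else Y i ω / Y (i - 1) ω - 1)
    (lam : ℝ) (hlam : lam ∈ Set.Ioc (0:ℝ) (1/4)) :
    μ {ω | ∃ i ∈ Finset.Icc 1 n, lam ≤ |Y i ω - 1|} ≤
      ENNReal.ofReal
        (23 * (∫ ω, ∑ i ∈ Finset.Icc 1 n, min |R i ω| ((R i ω) ^ 2) ∂μ) / lam ^ 2) := by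
  obtain ⟨hl0, hl4⟩ := hlam
  set S := ∫ ω, ∑ i ∈ Icc 1 n, min |R i ω| (R i ω ^ 2) ∂μ
  have hint i : Integrable (R i) μ := by
    rw [show R i = _ from funext (hR i)]; exact hY.integrable_relChange hpos (i.sub_le 1)
  have hS_eq : S = ∑ i ∈ Icc 1 n, ∫ ω, min |R i ω| (R i ω ^ 2) ∂μ :=
    integral_finsetSum _ fun i _ ↦ (hint i).min_abs_sq
  have hpot := hY.integral_huber_stoppedProcess_le hpos h0 hl0.le hl4 n
  simp only [relChange, ← hR, ← hS_eq] at hpot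
  have hS : 0 ≤ S :=
    integral_nonneg fun ω ↦ sum_nonneg fun i _ ↦ le_min (abs_nonneg _) (sq_nonneg _)
  have hA : {ω | ∃ i ∈ Icc 1 n, lam ≤ |Y i ω - 1|} ⊆ {ω | ∃ i ≤ n, lam ≤ |Y i ω - 1|} :=
    fun ω ⟨i, hi, hYi⟩ ↦ ⟨i, (mem_Icc.1 hi).2, hYi⟩
  rw [← ENNReal.ofReal_toReal (measure_ne_top μ _)]
  refine ENNReal.ofReal_le_ofReal ((le_div_iff₀ (by positivity)).2 ?_)
  calc μ.real {ω | ∃ i ∈ Icc 1 n, lam ≤ |Y i ω - 1|} * lam ^ 2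
      ≤ lam ^ 2 * μ.real {ω | ∃ i ≤ n, lam ≤ |Y i ω - 1|} := by
        rw [mul_comm]; exact mul_le_mul_of_nonneg_left (measureReal_mono hA) (sq_nonneg lam)
    _ ≤ 4 * S := (hY.sq_mul_measureReal_le_integral_huber hl0.le n).trans hpot
    _ ≤ 23 * S := by linarith
end

section
/- Let X be a random variable drawn from either P or Q. Assume Pr_P[|X| ≤ 1] = 1 and that there exist ε, σ², K_1, K_2 > 0 such that Pr_Q[|X| ≤ 1] ≥ 1−ε and Pr_Q[|X| ≥ t] ≤ K_2·exp(−t²/(K_1σ²)) for all 0 ≤ t ≤ 1. Then there exists K_3 = K_3(K_1, K_2, ε) > 0 such that E_P[X²] ≤ K_3·σ²·(D(P||Q) + 1). -/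
/-!
Donsker–Varadhan: for every `f`, `E_P[f] ≤ D(P‖Q) + E_Q[e^f] - 1`. Take `f = X² / (2K₁σ²)`,
with `X` truncated at `1` so that only the tail bound on `[0, 1]` is needed (this does not change
`E_P[X²]`, as `|X| ≤ 1` `P`-a.s.). Summation by parts over the values of `f` turns the tail bound
`Q[f ≥ s] ≤ K₂ e^{-2s}` into `E_Q[e^f] - 1 ≤ K₂`.
-/

open Finset

open Real

lemma exp_sub_exp_mul_exp_neg_two_mul_le (a b : ℝ) :
    (exp a - exp b) * exp (-2 * a) ≤ exp (-b) - exp (-a) := by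
  have ha : exp a * exp (-a) = 1 := by rw [← exp_add, add_neg_cancel, exp_zero]
  have hb : exp b * exp (-b) = 1 := by rw [← exp_add, add_neg_cancel, exp_zero]
  have h2a : exp (-2 * a) = exp (-a) * exp (-a) := by rw [← exp_add]; ring_nf
  rw [h2a]
  -- the gap is `e^b (e^{-a} - e^{-b})²`
  linear_combination exp (-a) * ha + (exp (-b) - 2 * exp (-a)) * hb +
    mul_nonneg (exp_pos b).le (sq_nonneg (exp (-a) - exp (-b)))

/-- Induction removes a point `a` where `h` is minimal: the layer between `b` and `h a` costs
`(e^{h a} - e^b) Q[h ≥ h a] ≤ K (e^{-b} - e^{-h a})`, so the bounds telescope. -/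
theorem Finset.sum_mul_exp_sub_exp_le_of_tail {ι : Type*} (s : Finset ι) {Q h : ι → ℝ} {K : ℝ}
    (hQ : ∀ x ∈ s, 0 ≤ Q x) (hK : 0 ≤ K)
    (htail : ∀ x ∈ s, ∑ y ∈ s with h x ≤ h y, Q y ≤ K * exp (-2 * h x))
    {b : ℝ} (hb : ∀ x ∈ s, b ≤ h x) :
    ∑ x ∈ s, Q x * (exp (h x) - exp b) ≤ K * exp (-b) := by
  classical
  induction s using Finset.induction_on_min_value h generalizing b with
  | empty => simpa using mul_nonneg hK (exp_pos (-b)).le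
  | insert a s ha hmin ih =>
    have hmin' : ∀ y ∈ insert a s, h a ≤ h y := by simpa using hmin
    have hmass : ∑ y ∈ insert a s, Q y ≤ K * exp (-2 * h a) := by
      have := htail a (mem_insert_self a s)
      rwa [filter_true_of_mem hmin'] at this
    have hrest : ∑ x ∈ s, Q x * (exp (h x) - exp (h a)) ≤ K * exp (-h a) := by
      refine ih (fun x hx => hQ x (mem_insert_of_mem hx)) (fun x hx => ?_) hmin
      refine le_trans ?_ (htail x (mem_insert_of_mem hx))
      exact sum_le_sum_of_subset_of_nonneg (filter_subset_filter _ (subset_insert a s))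
        fun y hy _ => hQ y (mem_filter.1 hy).1
    calc ∑ x ∈ insert a s, Q x * (exp (h x) - exp b)
        = ∑ x ∈ s, Q x * (exp (h x) - exp (h a)) +
            (exp (h a) - exp b) * ∑ y ∈ insert a s, Q y := by
          have hsplit : ∀ x, Q x * (exp (h x) - exp b) =
              Q x * (exp (h x) - exp (h a)) + (exp (h a) - exp b) * Q x := fun x => by ring
          rw [sum_congr rfl fun x _ => hsplit x, sum_add_distrib, ← mul_sum, sum_insert ha,
            sub_self, mul_zero, zero_add]
      _ ≤ K * exp (-h a) + (exp (h a) - exp b) * (K * exp (-2 * h a)) := by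
          gcongr
          exact sub_nonneg.2 (exp_le_exp.2 (hb a (mem_insert_self a s)))
      _ ≤ K * exp (-b) := by
          nlinarith [mul_le_mul_of_nonneg_left (exp_sub_exp_mul_exp_neg_two_mul_le (h a) b) hK]

lemma mul_le_mul_log_div_add_mul_exp_sub {p q : ℝ} (f : ℝ) (hp : 0 ≤ p) (hq : 0 ≤ q)
    (hpq : q = 0 → p = 0) : p * f ≤ p * log (p / q) + (q * exp f - p) := by
  rcases hp.eq_or_lt with rfl | hp
  · simpa using mul_nonneg hq (exp_pos f).le
  have hq : 0 < q := hq.lt_of_ne fun h => hp.ne' (hpq h.symm)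
  have hlog := log_le_sub_one_of_pos (show 0 < q * exp f / p by positivity)
  rw [log_div (by positivity) hp.ne', log_mul hq.ne' (exp_pos f).ne', log_exp] at hlog
  rw [log_div hp.ne' hq.ne']
  have hcancel : p * (q * exp f / p) = q * exp f := mul_div_cancel₀ _ hp.ne'
  linear_combination mul_le_mul_of_nonneg_left hlog hp.le + hcancel

theorem sum_mul_le_KL_add_sum_mul_exp_sub_one {α : Type*} [Fintype α] {P Q : α → ℝ}
    (hP : IsDist P) (hQ : IsDist Q) (hPQ : ∀ x, Q x = 0 → P x = 0) (f : α → ℝ) :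
    ∑ x, P x * f x ≤ KL P Q + ∑ x, Q x * (exp (f x) - 1) := by
  calc ∑ x, P x * f x
      ≤ ∑ x, (P x * log (P x / Q x) + (Q x * exp (f x) - P x)) :=
        sum_le_sum fun x _ => mul_le_mul_log_div_add_mul_exp_sub _ (hP.1 x) (hQ.1 x) (hPQ x)
    _ = KL P Q + ∑ x, Q x * (exp (f x) - 1) := by
        simp only [sum_add_distrib, sum_sub_distrib, mul_sub, mul_one, hP.2, hQ.2, KL]

theorem KL_nonneg {α : Type*} [Fintype α] {P Q : α → ℝ} (hP : IsDist P) (hQ : IsDist Q)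
    (hPQ : ∀ x, Q x = 0 → P x = 0) : 0 ≤ KL P Q := by
  simpa using sum_mul_le_KL_add_sum_mul_exp_sub_one hP hQ hPQ 0

theorem IsDist.sum_mul_congr_of_sum_mul_ite_eq_one {α : Type*} [Fintype α] {P : α → ℝ}
    (hP : IsDist P) {p : α → Prop} [DecidablePred p]
    (h : ∑ x, P x * (if p x then 1 else 0) = 1) {f g : α → ℝ} (hfg : ∀ x, p x → f x = g x) :
    ∑ x, P x * f x = ∑ x, P x * g x := by
  have hout : ∑ y with ¬ p y, P y = 0 := by
    have := sum_filter_add_sum_filter_not univ p P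
    rw [sum_filter, hP.2, ← h] at this
    simpa using this
  have hzero := (sum_eq_zero_iff_of_nonneg fun y _ => hP.1 y).1 hout
  refine sum_congr rfl fun x _ => ?_
  by_cases hx : p x
  · rw [hfg x hx]
  · simp [hzero x (by simpa using hx)]

theorem sum_mul_exp_min_abs_one_sq_sub_one_le {α : Type*} [Fintype α] {Q X : α → ℝ} {K s : ℝ}
    (hQ : ∀ x, 0 ≤ Q x) (hK : 0 ≤ K) (hs : 0 < s)
    (htail : ∀ t : ℝ, 0 ≤ t → t ≤ 1 →
      ∑ x, Q x * (if t ≤ |X x| then 1 else 0) ≤ K * exp (-(t ^ 2) / s)) :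
    ∑ x, Q x * (exp (min |X x| 1 ^ 2 / (2 * s)) - 1) ≤ K := by
  set m : α → ℝ := fun x => min |X x| 1
  have hm0 : ∀ y, 0 ≤ m y := fun y => le_min (abs_nonneg _) zero_le_one
  have hlevel : ∀ x, ∑ y with m x ^ 2 / (2 * s) ≤ m y ^ 2 / (2 * s), Q y ≤
      K * exp (-2 * (m x ^ 2 / (2 * s))) := by
    intro x
    have hsub : ∀ y, m x ^ 2 / (2 * s) ≤ m y ^ 2 / (2 * s) → m x ≤ |X y| := by
      intro y hy
      rw [div_le_div_iff_of_pos_right (by positivity),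
        pow_le_pow_iff_left₀ (hm0 x) (hm0 y) two_ne_zero] at hy
      exact hy.trans (min_le_left _ _)
    calc ∑ y with m x ^ 2 / (2 * s) ≤ m y ^ 2 / (2 * s), Q y
        ≤ ∑ y with m x ≤ |X y|, Q y :=
          sum_le_sum_of_subset_of_nonneg (fun y => by simpa using hsub y) fun y _ _ => hQ y
      _ = ∑ y, Q y * if m x ≤ |X y| then 1 else 0 := by simp [sum_filter]
      _ ≤ K * exp (-(m x ^ 2) / s) := htail _ (hm0 x) (min_le_right _ _)
      _ = K * exp (-2 * (m x ^ 2 / (2 * s))) := by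
          congr 2
          field_simp
  simpa using sum_mul_exp_sub_exp_le_of_tail univ (fun x _ => hQ x) hK
    (h := fun x => m x ^ 2 / (2 * s)) (b := 0) (fun x _ => hlevel x) (fun x _ => by positivity)

theorem sq_moment_le_of_subgaussian_general (K₁ K₂ ε : ℝ) (hK₁ : 0 < K₁) (hK₂ : 0 < K₂) :
    ∃ K₃ : ℝ, 0 < K₃ ∧
      ∀ (α : Type) [Fintype α], ∀ (P Q : α → ℝ) (X : α → ℝ) (σ2 : ℝ),
        0 < σ2 → IsDist P → IsDist Q → (∀ x, Q x = 0 → P x = 0) →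
        (∑ x, P x * (if |X x| ≤ 1 then 1 else 0)) = 1 →
        1 - ε ≤ ∑ x, Q x * (if |X x| ≤ 1 then 1 else 0) →
        (∀ t : ℝ, 0 ≤ t → t ≤ 1 →
          ∑ x, Q x * (if t ≤ |X x| then 1 else 0) ≤
            K₂ * Real.exp (-(t ^ 2) / (K₁ * σ2))) →
        ∑ x, P x * (X x) ^ 2 ≤ K₃ * σ2 * (KL P Q + 1) := by
  refine ⟨2 * K₁ * (1 + K₂), by positivity, ?_⟩
  intro α _ P Q X σ2 hσ hP hQ hPQ hPbdd _ htail
  set c := 2 * (K₁ * σ2)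
  have hc : 0 < c := by positivity
  have htrunc : ∑ x, P x * X x ^ 2 = ∑ x, P x * min |X x| 1 ^ 2 :=
    hP.sum_mul_congr_of_sum_mul_ite_eq_one hPbdd fun x hx => by rw [min_eq_left hx, sq_abs]
  have hmgf := sum_mul_exp_min_abs_one_sq_sub_one_le hQ.1 hK₂.le (by positivity) htail
  have hdv := sum_mul_le_KL_add_sum_mul_exp_sub_one hP hQ hPQ fun x => min |X x| 1 ^ 2 / c
  have hKL := KL_nonneg hP hQ hPQ
  calc ∑ x, P x * X x ^ 2 = c * ∑ x, P x * (min |X x| 1 ^ 2 / c) := by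
        rw [htrunc, mul_sum]
        exact sum_congr rfl fun x _ => by field_simp
    _ ≤ c * (KL P Q + K₂) := by gcongr; linarith
    _ ≤ 2 * K₁ * (1 + K₂) * σ2 * (KL P Q + 1) := by
        nlinarith [mul_nonneg hc.le (add_nonneg zero_le_one (mul_nonneg hK₂.le hKL))]

/-- If `|X| ≤ 1` `P`-almost surely, `Pr_Q[|X| ≤ 1] ≥ 1 − ε`, and `Q` has the
sub-Gaussian tail bound `Pr_Q[|X| ≥ t] ≤ K₂ exp(−t²/(K₁σ²))` for `0 ≤ t ≤ 1`, then
there exists `K₃ = K₃(K₁, K₂, ε) > 0` with `E_P[X²] ≤ K₃ σ² (D(P||Q) + 1)`.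
(We assume `P ≪ Q`, as the statement is trivial when `D(P||Q) = ∞`.) -/
theorem sq_moment_le_of_subgaussian (K₁ K₂ ε : ℝ) (hK₁ : 0 < K₁) (hK₂ : 0 < K₂)
    (hε : 0 < ε) :
    ∃ K₃ : ℝ, 0 < K₃ ∧
      ∀ (α : Type) [Fintype α], ∀ (P Q : α → ℝ) (X : α → ℝ) (σ2 : ℝ),
        0 < σ2 → IsDist P → IsDist Q → (∀ x, Q x = 0 → P x = 0) →
        (∑ x, P x * (if |X x| ≤ 1 then 1 else 0)) = 1 →
        1 - ε ≤ ∑ x, Q x * (if |X x| ≤ 1 then 1 else 0) →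
        (∀ t : ℝ, 0 ≤ t → t ≤ 1 →
          ∑ x, Q x * (if t ≤ |X x| then 1 else 0) ≤
            K₂ * Real.exp (-(t ^ 2) / (K₁ * σ2))) →
        ∑ x, P x * (X x) ^ 2 ≤ K₃ * σ2 * (KL P Q + 1) :=
  sq_moment_le_of_subgaussian_general K₁ K₂ ε hK₁ hK₂
end

section
/- Let Idl be a distribution over m×n matrices X (with additional row variables Y_i over {0,1}^n) obtained by conditioning a column-independent distribution Unf on an event W, where Y_{i,j} indicates an event E_{i,j} with Unf[E_{i,j} | X_{≤i,j}] = δ_{i,j} ≥ δ for every fixing of X_{≤i,j}. Define ρ_{i,j}(x_{<i}) = Idl[E_{i,j}|X_{<i}=x_{<i}]/δ_{i,j} − 1. Then E_{Idl}[Σ_{i=1}^m Σ_{j=1}^n min{|ρ_{i,j}|, ρ_{i,j}²}] ≤ 4d/δ, where d = Σ_{i=1}^m D(Idl_{X_i Y_i} || Unf_{X_i Y_i} | Idl_{X_{<i}}). -/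
open Finset

/-!
Fix a row `i`. Given `X_{<i}`, column independence of `Unf` and the constancy of
`Unf[E_{i,j} | X_{≤i,j}]` make the indicators `Y_{i,j}` independent Bernoulli(`δ_{i,j}`).
The `i`-th summand of `d` is the divergence of `Idl_{X_{<i} X_i Y_i}` from the hybrid law
`Idl_{X_{<i}} ⊗ Unf_{X_i Y_i | X_{<i}}`, so the Gibbs (Donsker–Varadhan) inequality bounds it
below by `E_Idl f - log E_hybrid e^f` for any `f` of `(X_{<i}, Y_i)`. Take
`f = ∑_j t_j Y_{i,j} - log E_Unf[exp ∑_j t_j Y_{i,j} | X_{<i}]` with `t_j = min(ρ_{i,j}, 1)/2`: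
then `E_hybrid e^f = 1`, the log-moment generating function splits over `j`, and each Bernoulli
term is at least `δ_{i,j} min(|ρ_{i,j}|, ρ_{i,j}²)/4`. Summing over `i` gives the claim.
-/

open Real

lemma mul_add_sub_mul_exp_le_mul_log {a b : ℝ} (c : ℝ) (ha : 0 ≤ a) (hb : 0 ≤ b)
    (hab : 0 < a → 0 < b) : a * c + a - b * exp c ≤ a * log (a / b) := by
  rcases ha.eq_or_lt with rfl | ha
  · simp only [zero_mul, zero_add, zero_sub, neg_nonpos]
    positivity
  have ht : 0 < b * exp c / a := by have := hab ha; positivity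
  have hlog : log (a / b) = c - log (b * exp c / a) := by
    rw [log_div (mul_pos (hab ha) (exp_pos c)).ne' ha.ne', log_mul (hab ha).ne' (exp_pos c).ne',
      log_exp, log_div ha.ne' (hab ha).ne']
    ring
  have := log_le_sub_one_of_pos ht
  rw [hlog]
  calc a * c + a - b * exp c = a * (c - (b * exp c / a - 1)) := by field_simp; ring
    _ ≤ a * (c - log (b * exp c / a)) := by gcongr

lemma exp_le_one_add_add_sq {x : ℝ} (hx : |x| ≤ 1) : exp x ≤ 1 + x + x ^ 2 := by
  linarith [(abs_le.mp (abs_exp_sub_one_sub_id_le hx)).2]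

lemma min_abs_sq_div_four_le {ρ : ℝ} (hρ : -1 ≤ ρ) :
    min |ρ| (ρ ^ 2) / 4 ≤ (1 + ρ) * (min ρ 1 / 2) - (exp (min ρ 1 / 2) - 1) := by
  rcases le_or_gt ρ 1 with h | h
  · rw [min_eq_left h]
    have := exp_le_one_add_add_sq (x := ρ / 2) (abs_le.mpr ⟨by linarith, by linarith⟩)
    nlinarith [min_le_right |ρ| (ρ ^ 2)]
  · rw [min_eq_right h.le]
    have := exp_le_one_add_add_sq (x := 1 / 2) (by norm_num [abs_of_pos])
    rw [abs_of_pos (by linarith)]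
    linarith [min_le_left ρ (ρ ^ 2)]

lemma one_add_mul_exp_sub_one_pos {q : ℝ} (hq0 : 0 ≤ q) (hq1 : q ≤ 1) (t : ℝ) :
    0 < 1 + q * (exp t - 1) := by
  rcases hq0.eq_or_lt with rfl | hq
  · norm_num
  · nlinarith [mul_pos hq (exp_pos t)]

/-- The Bernoulli estimate `D((1+ρ)q ‖ q) ≥ q min(|ρ|, ρ²)/4` in variational form, at the tilt
`min(ρ, 1)/2`; here `a = (1+ρ)q`. -/
lemma bernoulli_tilt_bound {δ q a : ℝ} (hδ : 0 < δ) (hδq : δ ≤ q) (hq : q ≤ 1) (ha : 0 ≤ a) :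
    δ * min |a / q - 1| ((a / q - 1) ^ 2) / 4 ≤
      a * (min (a / q - 1) 1 / 2) - log (1 + q * (exp (min (a / q - 1) 1 / 2) - 1)) := by
  set ρ := a / q - 1
  set t := min ρ 1 / 2
  have hq0 : 0 < q := hδ.trans_le hδq
  have ha' : a = (1 + ρ) * q := by simp only [ρ]; field_simp; ring
  have hρ : -1 ≤ ρ := by
    have : 0 ≤ a / q := by positivity
    linarith
  have hlog : log (1 + q * (exp t - 1)) ≤ q * (exp t - 1) := by
    linarith [log_le_sub_one_of_pos (one_add_mul_exp_sub_one_pos hq0.le hq t)]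
  have hM : 0 ≤ min |ρ| (ρ ^ 2) := le_min (abs_nonneg ρ) (sq_nonneg ρ)
  calc δ * min |ρ| (ρ ^ 2) / 4 ≤ q * (min |ρ| (ρ ^ 2) / 4) := by nlinarith
    _ ≤ q * ((1 + ρ) * t - (exp t - 1)) := by gcongr; exact min_abs_sq_div_four_le hρ
    _ = a * t - q * (exp t - 1) := by rw [ha']; ring
    _ ≤ a * t - log (1 + q * (exp t - 1)) := by linarith

lemma mul_bernoulli_tilt_bound {δ q A P : ℝ} (hδ : 0 < δ) (hδq : δ ≤ q) (hq : q ≤ 1)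
    (hA : 0 ≤ A) (hAP : A ≤ P) :
    P * (δ / 4 * min |A / (q * P) - 1| ((A / (q * P) - 1) ^ 2)) ≤
      A * (min (A / (q * P) - 1) 1 / 2) -
        P * log (1 + q * (exp (min (A / (q * P) - 1) 1 / 2) - 1)) := by
  rcases (hA.trans hAP).eq_or_lt with rfl | hP
  · obtain rfl : A = 0 := le_antisymm hAP hA
    simp
  have h := bernoulli_tilt_bound hδ hδq hq (div_nonneg hA hP.le)
  rw [div_div, mul_comm P q] at h
  calc P * (δ / 4 * min |A / (q * P) - 1| ((A / (q * P) - 1) ^ 2))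
      = P * (δ * min |A / (q * P) - 1| ((A / (q * P) - 1) ^ 2) / 4) := by ring
    _ ≤ P * (A / P * (min (A / (q * P) - 1) 1 / 2) -
          log (1 + q * (exp (min (A / (q * P) - 1) 1 / 2) - 1))) := by gcongr
    _ = _ := by field_simp

section Fiber

variable {Ω P : Type*} [Fintype Ω] [DecidableEq P]

def fiberMass (w : Ω → ℝ) (φ : Ω → P) (x : Ω) : ℝ := ∑ y with φ y = φ x, w y

variable {v w g : Ω → ℝ} {φ : Ω → P} {x : Ω}

lemma fiberMass_congr_fun (h : ∀ y, φ y = φ x → v y = w y) :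
    fiberMass v φ x = fiberMass w φ x :=
  sum_congr rfl fun y hy => h y (mem_filter.1 hy).2

lemma fiberMass_congr (w : Ω → ℝ) {x y : Ω} (h : φ x = φ y) :
    fiberMass w φ x = fiberMass w φ y := by
  simp only [fiberMass, h]

lemma fiberMass_add : fiberMass (fun y => v y + w y) φ x = fiberMass v φ x + fiberMass w φ x :=
  sum_add_distrib

lemma fiberMass_sub : fiberMass (fun y => v y - w y) φ x = fiberMass v φ x - fiberMass w φ x :=
  sum_sub_distrib ..

lemma fiberMass_sum {ι : Type*} (s : Finset ι) (w : ι → Ω → ℝ) :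
    fiberMass (fun y => ∑ k ∈ s, w k y) φ x = ∑ k ∈ s, fiberMass (w k) φ x :=
  sum_comm

lemma fiberMass_mul_right (hg : g.FactorsThrough φ) :
    fiberMass (fun y => w y * g y) φ x = fiberMass w φ x * g x := by
  rw [fiberMass, fiberMass, sum_mul]
  exact sum_congr rfl fun y hy => by rw [hg (mem_filter.1 hy).2]

lemma fiberMass_nonneg (hw : ∀ y, 0 ≤ w y) : 0 ≤ fiberMass w φ x :=
  sum_nonneg fun y _ => hw y

lemma le_fiberMass (hw : ∀ y, 0 ≤ w y) : w x ≤ fiberMass w φ x :=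
  single_le_sum (fun y _ => hw y) (by simp)

lemma fiberMass_mono (h : ∀ y, v y ≤ w y) : fiberMass v φ x ≤ fiberMass w φ x :=
  sum_le_sum fun y _ => h y

lemma exists_pos_of_fiberMass_pos (hw : ∀ y, 0 ≤ w y) (h : 0 < fiberMass w φ x) :
    ∃ y, φ y = φ x ∧ 0 < w y := by
  obtain ⟨y, hy, hwy⟩ := (sum_pos_iff_of_nonneg fun y _ => hw y).1 h
  exact ⟨y, (mem_filter.1 hy).2, hwy⟩

lemma sum_le_sum_of_fiberMass_le (h : ∀ x, fiberMass v φ x ≤ fiberMass w φ x) :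
    ∑ x, v x ≤ ∑ x, w x := by
  have hmaps : ∀ x ∈ (univ : Finset Ω), φ x ∈ univ.image φ :=
    fun x _ => mem_image_of_mem φ (mem_univ x)
  rw [← sum_fiberwise_of_maps_to hmaps v, ← sum_fiberwise_of_maps_to hmaps w]
  refine sum_le_sum fun k hk => ?_
  obtain ⟨x, -, rfl⟩ := mem_image.1 hk
  exact h x

lemma sum_eq_sum_of_fiberMass_eq (h : ∀ x, fiberMass v φ x = fiberMass w φ x) :
    ∑ x, v x = ∑ x, w x :=
  le_antisymm (sum_le_sum_of_fiberMass_le fun x => (h x).le)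
    (sum_le_sum_of_fiberMass_le fun x => (h x).ge)

lemma fiberMass_eq_of_factorsThrough {Q : Type*} [DecidableEq Q] {σ : Ω → Q}
    (hφσ : φ.FactorsThrough σ) (h : ∀ x, fiberMass v σ x = fiberMass w σ x) (x : Ω) :
    fiberMass v φ x = fiberMass w φ x := by
  have hg : (fun y => if φ y = φ x then (1 : ℝ) else 0).FactorsThrough σ :=
    fun y z h => by simp only [hφσ h]
  have hind (u : Ω → ℝ) : fiberMass u φ x = ∑ y, u y * if φ y = φ x then 1 else 0 := by
    simp only [fiberMass, sum_filter, mul_boole]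
  rw [hind, hind]
  exact sum_eq_sum_of_fiberMass_eq fun z => by
    rw [fiberMass_mul_right hg, fiberMass_mul_right hg, h]

lemma sum_mul_add_sub_mul_exp_le_sum_mul_log {Q : Type*} [DecidableEq Q] {ψ : Ω → Q}
    {p r f : Ω → ℝ} (hp : ∀ x, 0 ≤ p x) (hr : ∀ x, 0 ≤ r x) (hpr : ∀ x, 0 < p x → 0 < r x)
    (hf : f.FactorsThrough ψ) :
    ∑ x, (p x * f x + p x - r x * exp (f x)) ≤
      ∑ x, p x * log (fiberMass p ψ x / fiberMass r ψ x) := by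
  refine sum_le_sum_of_fiberMass_le (φ := ψ) fun x => ?_
  rw [fiberMass_sub, fiberMass_add, fiberMass_mul_right hf,
    fiberMass_mul_right (g := fun y => exp (f y)) fun a b h => congrArg exp (hf h),
    fiberMass_mul_right fun a b h => by rw [fiberMass_congr p h, fiberMass_congr r h]]
  refine mul_add_sub_mul_exp_le_mul_log _ (fiberMass_nonneg hp) (fiberMass_nonneg hr) fun h => ?_
  obtain ⟨y, hy, hpy⟩ := exists_pos_of_fiberMass_pos hp h
  exact (hpr y hpy).trans_le (fiberMass_congr r hy ▸ le_fiberMass hr)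

lemma le_one_of_fiberMass_ite_eq_mul {A : Ω → Prop} [DecidablePred A] {q : ℝ}
    (hw : ∀ y, 0 ≤ w y) (hpos : ∃ y, 0 < w y)
    (h : ∀ x, fiberMass (fun y => if A y then w y else 0) φ x = fiberMass w φ x * q) : q ≤ 1 := by
  obtain ⟨x, hx⟩ := hpos
  refine le_of_mul_le_mul_left ?_ (hx.trans_le (le_fiberMass (φ := φ) hw))
  rw [mul_one, ← h]
  exact fiberMass_mono fun y => by split_ifs; exacts [le_rfl, hw y]

lemma sum_filter_and_eq_fiberMass [DecidableEq Ω] {s : Finset Ω} {Pr Z : Ω → Prop}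
    [DecidablePred Pr] [DecidablePred Z]
    (v : Ω → ℝ) (h : ∀ y, Pr y ↔ Z y ∧ φ y = φ x) :
    ∑ y ∈ s.filter Pr, v y =
      fiberMass (fun y => if Z y then (if y ∈ s then v y else 0) else 0) φ x := by
  rw [fiberMass, sum_filter, sum_filter, ← univ_inter s, ← sum_ite_mem]
  refine sum_congr rfl fun y _ => ?_
  by_cases hy : y ∈ s <;> by_cases hZ : Z y <;> by_cases hφ : φ y = φ x <;> simp [h, hy, hZ, hφ]

lemma sum_filter_eq_fiberMass [DecidableEq Ω] {s : Finset Ω} {Pr : Ω → Prop} [DecidablePred Pr]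
    (v : Ω → ℝ) (h : ∀ y, Pr y ↔ φ y = φ x) :
    ∑ y ∈ s.filter Pr, v y = fiberMass (fun y => if y ∈ s then v y else 0) φ x := by
  simpa using sum_filter_and_eq_fiberMass (Z := fun _ => True) v fun y => by
    rw [true_and]
    exact h y

end Fiber

section Tilt

variable {Ω P : Type*} [Fintype Ω] [DecidableEq P] {n : ℕ}

/-- Given `φ`, the events `Y · j` are independent under `u` with probabilities `q j`, stated
through the joint probability generating function. -/
def IsCondBernoulli (u : Ω → ℝ) (φ : Ω → P) (Y : Ω → Fin n → Prop) [∀ x j, Decidable (Y x j)]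
    (q : Fin n → ℝ) : Prop :=
  ∀ x (e : Fin n → ℝ), fiberMass (fun y => u y * ∏ j, if Y y j then e j else 1) φ x =
    fiberMass u φ x * ∏ j, (1 + q j * (e j - 1))

noncomputable def bernoulliCGF (q t : Fin n → ℝ) : ℝ := ∑ j, log (1 + q j * (exp (t j) - 1))

lemma exp_bernoulliCGF {q : Fin n → ℝ} (hq0 : ∀ j, 0 ≤ q j) (hq1 : ∀ j, q j ≤ 1)
    (t : Fin n → ℝ) : exp (bernoulliCGF q t) = ∏ j, (1 + q j * (exp (t j) - 1)) := by
  rw [bernoulliCGF, exp_sum]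
  exact prod_congr rfl fun j _ => exp_log (one_add_mul_exp_sub_one_pos (hq0 j) (hq1 j) _)

variable {p u : Ω → ℝ} {φ : Ω → P} {Y : Ω → Fin n → Prop} [∀ x j, Decidable (Y x j)]
  {q : Fin n → ℝ}

lemma sum_mul_exp_tilt_eq (hp : ∀ x, 0 ≤ p x) (hu : ∀ x, 0 ≤ u x)
    (hpu : ∀ x, 0 < p x → 0 < u x) (hq0 : ∀ j, 0 ≤ q j) (hq1 : ∀ j, q j ≤ 1)
    (hY : IsCondBernoulli u φ Y q) {t : Ω → Fin n → ℝ} (ht : t.FactorsThrough φ) :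
    ∑ x, u x * (fiberMass p φ x / fiberMass u φ x) *
        exp ((∑ j, if Y x j then t x j else 0) - bernoulliCGF q (t x)) = ∑ x, p x := by
  refine sum_eq_sum_of_fiberMass_eq (φ := φ) fun x => ?_
  set c : Ω → ℝ := fun y => fiberMass p φ y / (fiberMass u φ y * exp (bernoulliCGF q (t y)))
  have hc : c.FactorsThrough φ := fun a b h => by
    simp only [c, fiberMass_congr p h, fiberMass_congr u h, ht h]
  have hterm : ∀ y, u y * (fiberMass p φ y / fiberMass u φ y) *
      exp ((∑ j, if Y y j then t y j else 0) - bernoulliCGF q (t y)) =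
      u y * (∏ j, if Y y j then exp (t y j) else 1) * c y := fun y => by
    simp only [c, exp_sub, exp_sum, apply_ite exp, exp_zero]
    ring
  have hfib : fiberMass (fun y => u y * ∏ j, if Y y j then exp (t y j) else 1) φ x =
      fiberMass u φ x * exp (bernoulliCGF q (t x)) := by
    rw [fiberMass_congr_fun (w := fun y => u y * ∏ j, if Y y j then exp (t x j) else 1)
      fun y hy => by rw [ht hy], hY, exp_bernoulliCGF hq0 hq1]
  simp only [hterm]
  rw [fiberMass_mul_right hc, hfib]
  rcases (fiberMass_nonneg (φ := φ) (x := x) hu).eq_or_lt with hux | hux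
  · have hpx : fiberMass p φ x = 0 := by
      refine le_antisymm (not_lt.1 fun h => ?_) (fiberMass_nonneg hp)
      obtain ⟨y, hy, hpy⟩ := exists_pos_of_fiberMass_pos hp h
      exact hux.not_lt ((hpu y hpy).trans_le (fiberMass_congr u hy ▸ le_fiberMass hu))
    simp [c, ← hux, hpx]
  · simp only [c]
    field_simp

noncomputable def condDeviation (p : Ω → ℝ) (φ : Ω → P) (Y : Ω → Fin n → Prop)
    [∀ x j, Decidable (Y x j)] (q : Fin n → ℝ) (x : Ω) (j : Fin n) : ℝ :=
  fiberMass (fun y => if Y y j then p y else 0) φ x / (q j * fiberMass p φ x) - 1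

lemma factorsThrough_condDeviation : (condDeviation p φ Y q).FactorsThrough φ :=
  fun a b h => funext fun j => by simp only [condDeviation, fiberMass_congr _ h]

lemma sum_mul_min_abs_sq_le_sum_mul_tilt {δ : ℝ} (hδ : 0 < δ) (hδq : ∀ j, δ ≤ q j)
    (hq1 : ∀ j, q j ≤ 1) (hp : ∀ x, 0 ≤ p x) :
    ∑ x, p x * (δ / 4 * ∑ j, min |condDeviation p φ Y q x j| (condDeviation p φ Y q x j ^ 2)) ≤
      ∑ x, p x * ((∑ j, if Y x j then min (condDeviation p φ Y q x j) 1 / 2 else 0) -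
        bernoulliCGF q (fun j => min (condDeviation p φ Y q x j) 1 / 2)) := by
  set ρ := condDeviation p φ Y q
  have hρ : ρ.FactorsThrough φ := factorsThrough_condDeviation
  let t : Ω → Fin n → ℝ := fun x j => min (ρ x j) 1 / 2
  change _ ≤ ∑ x, p x * ((∑ j, if Y x j then t x j else 0) - bernoulliCGF q (t x))
  have ht : t.FactorsThrough φ := fun a b h => by simp only [t, hρ h]
  have hexpand : ∀ y, p y * ((∑ j, if Y y j then t y j else 0) - bernoulliCGF q (t y)) =
      (∑ j, (if Y y j then p y else 0) * t y j) - p y * bernoulliCGF q (t y) := fun y => by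
    rw [mul_sub, mul_sum]
    congr 1
    exact sum_congr rfl fun j _ => by split_ifs <;> ring
  refine sum_le_sum_of_fiberMass_le (φ := φ) fun x => ?_
  simp only [hexpand]
  rw [fiberMass_sub, fiberMass_sum,
    fiberMass_mul_right (g := fun y => δ / 4 * ∑ j, min |ρ y j| (ρ y j ^ 2))
      fun a b h => by simp only [hρ h],
    fiberMass_mul_right (g := fun y => bernoulliCGF q (t y)) fun a b h => by simp only [ht h],
    sum_congr rfl fun j _ =>
      fiberMass_mul_right (g := fun y => t y j) fun a b h => congrFun (ht h) j]
  rw [bernoulliCGF, mul_sum, mul_sum, mul_sum, ← sum_sub_distrib]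
  refine sum_le_sum fun j _ => mul_bernoulli_tilt_bound hδ (hδq j) (hq1 j)
    (fiberMass_nonneg fun y => ?_) (fiberMass_mono fun y => ?_)
  all_goals split_ifs <;> simp [hp y]

variable {Q : Type*} [DecidableEq Q]

/-- `D(p_ψ ‖ u_ψ | p_φ)` for `φ` a function of `ψ`. With `φ = X_{<i}`, `ψ = (X_{<i}, X_i, Y_i)`,
`Y x j ↔ E_{i,j}` and `q = δ_{i,·}`, this and `condDeviation` are the paper's divergence and
`ρ_{i,j}`; both `ρ` and the log-ratio are unchanged when `p` is rescaled. -/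
noncomputable def condKLDiv (p u : Ω → ℝ) (φ : Ω → P) (ψ : Ω → Q) : ℝ :=
  ∑ x, p x * log ((fiberMass p ψ x / fiberMass p φ x) / (fiberMass u ψ x / fiberMass u φ x))

theorem mul_sum_min_abs_sq_condDeviation_le_condKLDiv {ψ : Ω → Q} {δ : ℝ}
    (hp : ∀ x, 0 ≤ p x) (hu : ∀ x, 0 ≤ u x) (hpu : ∀ x, 0 < p x → 0 < u x)
    (hψφ : φ.FactorsThrough ψ) (hψY : Y.FactorsThrough ψ) (hδ : 0 < δ) (hδq : ∀ j, δ ≤ q j)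
    (hq1 : ∀ j, q j ≤ 1) (hY : IsCondBernoulli u φ Y q) :
    δ / 4 * ∑ x, p x * ∑ j, min |condDeviation p φ Y q x j| (condDeviation p φ Y q x j ^ 2) ≤
      condKLDiv p u φ ψ := by
  set ρ := condDeviation p φ Y q
  have hρ : ρ.FactorsThrough φ := factorsThrough_condDeviation
  let t : Ω → Fin n → ℝ := fun x j => min (ρ x j) 1 / 2
  have ht : t.FactorsThrough φ := fun a b h => by simp only [t, hρ h]
  let f : Ω → ℝ := fun x => (∑ j, if Y x j then t x j else 0) - bernoulliCGF q (t x)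
  have hf : f.FactorsThrough ψ := fun a b h => by simp only [f, hψY h, ht (hψφ h)]
  -- the hybrid law: `φ` distributed as under `p`, the rest as under `u` given `φ`
  let r : Ω → ℝ := fun x => u x * (fiberMass p φ x / fiberMass u φ x)
  have hr : ∀ x, 0 ≤ r x := fun x =>
    mul_nonneg (hu x) (div_nonneg (fiberMass_nonneg hp) (fiberMass_nonneg hu))
  have hpr : ∀ x, 0 < p x → 0 < r x := fun x hx =>
    mul_pos (hpu x hx) (div_pos (hx.trans_le (le_fiberMass hp))
      ((hpu x hx).trans_le (le_fiberMass hu)))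
  have hrψ : ∀ x, fiberMass r ψ x = fiberMass u ψ x * (fiberMass p φ x / fiberMass u φ x) :=
    fun x => fiberMass_mul_right fun a b h => by
      simp only [fiberMass_congr p (hψφ h), fiberMass_congr u (hψφ h)]
  calc δ / 4 * ∑ x, p x * ∑ j, min |ρ x j| (ρ x j ^ 2)
      = ∑ x, p x * (δ / 4 * ∑ j, min |ρ x j| (ρ x j ^ 2)) := by
        rw [mul_sum]
        exact sum_congr rfl fun x _ => by ring
    _ ≤ ∑ x, p x * f x := sum_mul_min_abs_sq_le_sum_mul_tilt hδ hδq hq1 hp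
    _ = ∑ x, (p x * f x + p x - r x * exp (f x)) := by
        rw [sum_sub_distrib, sum_add_distrib,
          sum_mul_exp_tilt_eq hp hu hpu (fun j => hδ.le.trans (hδq j)) hq1 hY ht]
        ring
    _ ≤ ∑ x, p x * log (fiberMass p ψ x / fiberMass r ψ x) :=
        sum_mul_add_sub_mul_exp_le_sum_mul_log hp hr hpr hf
    _ = condKLDiv p u φ ψ := sum_congr rfl fun x _ => by rw [hrψ]; congr 2; ring

end Tilt

section Matrix

variable {α : Type*} {m n : ℕ}

lemma sum_prod_col [Fintype α] (g : Fin n → (Fin m → α) → ℝ) :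
    ∑ y : Fin m → Fin n → α, ∏ j, g j (fun i => y i j) = ∏ j, ∑ c, g j c := by
  rw [Fintype.prod_sum]
  exact Fintype.sum_equiv (Equiv.piComm _) _ _ fun y => rfl

variable [DecidableEq α]

/-- `(X_{<i}, X_i, Y_i)`. -/
def rowCell (E : Fin m → Fin n → Finset (Fin m → α)) (i : Fin m) (x : Fin m → Fin n → α) :
    (Set.Iio i → Fin n → α) × (Fin n → α) × (Fin n → Bool) :=
  ((Set.Iio i).domRestrict x, x i, fun j => decide ((fun i' => x i' j) ∈ E i j))

lemma rowCell_eq_iff {E : Fin m → Fin n → Finset (Fin m → α)} {i : Fin m}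
    {x y : Fin m → Fin n → α} :
    rowCell E i y = rowCell E i x ↔ (∀ j, y i j = x i j) ∧
      (∀ j, ((fun i' => y i' j) ∈ E i j ↔ (fun i' => x i' j) ∈ E i j)) ∧
      ∀ i', i' < i → y i' = x i' := by
  rw [rowCell, rowCell, Prod.mk.injEq, Prod.mk.injEq, Set.domRestrict_eq_domRestrict_iff,
    funext_iff, funext_iff]
  simp only [decide_eq_decide]
  exact ⟨fun ⟨h₁, h₂, h₃⟩ => ⟨h₂, h₃, h₁⟩, fun ⟨h₂, h₃, h₁⟩ => ⟨h₁, h₂, h₃⟩⟩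

variable [Fintype α]

section Conversion

variable (s : Finset (Fin m → Fin n → α)) (v : (Fin m → Fin n → α) → ℝ) (i : Fin m)
  (x : Fin m → Fin n → α)

lemma sum_filter_prefix :
    ∑ y ∈ s.filter (fun y => ∀ i' : Fin m, i' < i → y i' = x i'), v y =
      fiberMass (fun y => if y ∈ s then v y else 0) (Set.Iio i).domRestrict x :=
  sum_filter_eq_fiberMass v fun _ => Set.domRestrict_eq_domRestrict_iff.symm

lemma sum_filter_mem_prefix (A : Finset (Fin m → α)) (j : Fin n) :
    ∑ y ∈ s.filter (fun y => (fun i' => y i' j) ∈ A ∧ ∀ i' : Fin m, i' < i → y i' = x i'), v y =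
      fiberMass (fun y => if (fun i' => y i' j) ∈ A then (if y ∈ s then v y else 0) else 0)
        (Set.Iio i).domRestrict x :=
  sum_filter_and_eq_fiberMass v fun _ => and_congr_right' Set.domRestrict_eq_domRestrict_iff.symm

lemma sum_filter_rowCell (E : Fin m → Fin n → Finset (Fin m → α)) :
    ∑ y ∈ s.filter (fun y => (∀ j : Fin n, y i j = x i j) ∧
        (∀ j : Fin n, ((fun i' => y i' j) ∈ E i j ↔ (fun i' => x i' j) ∈ E i j)) ∧
        ∀ i' : Fin m, i' < i → y i' = x i'), v y =
      fiberMass (fun y => if y ∈ s then v y else 0) (rowCell E i) x :=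
  sum_filter_eq_fiberMass v fun _ => rowCell_eq_iff.symm

end Conversion

lemma fiberMass_prod_col (g : Fin n → (Fin m → α) → ℝ) (i : Fin m) (x : Fin m → Fin n → α) :
    fiberMass (fun y => ∏ j, g j (fun i' => y i' j)) (Set.Iio i).domRestrict x =
      ∏ j, fiberMass (g j) (Set.Iio i).domRestrict (fun i' => x i' j) := by
  simp only [fiberMass, sum_filter]
  rw [← sum_prod_col]
  refine sum_congr rfl fun y _ => ?_
  have hiff : (Set.Iio i).domRestrict y = (Set.Iio i).domRestrict x ↔
      ∀ j, (Set.Iio i).domRestrict (fun i' => y i' j) =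
        (Set.Iio i).domRestrict (fun i' => x i' j) := by
    simp only [Set.domRestrict_eq_domRestrict_iff]
    exact ⟨fun h j i' hi => congrFun (h hi) j, fun h i' hi => funext fun j => h j hi⟩
  rw [Fintype.prod_ite_zero]
  split_ifs with h₁ h₂ h₂
  exacts [rfl, absurd (hiff.1 h₁) h₂, absurd (hiff.2 h₂) h₁, rfl]

lemma fiberMass_ite_mem_eq_mul {A : Finset (Fin m → α)} {w : (Fin m → α) → ℝ} {q : ℝ}
    {i : Fin m}
    (h : ∀ z : Fin m → α, ∑ c ∈ A.filter (fun c => ∀ i' : Fin m, i' ≤ i → c i' = z i'), w c =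
      q * ∑ c ∈ univ.filter (fun c : Fin m → α => ∀ i' : Fin m, i' ≤ i → c i' = z i'), w c)
    (z : Fin m → α) :
    fiberMass (fun c => if c ∈ A then w c else 0) (Set.Iio i).domRestrict z =
      fiberMass w (Set.Iio i).domRestrict z * q := by
  rw [← fiberMass_mul_right (g := fun _ => q) fun _ _ _ => rfl]
  refine fiberMass_eq_of_factorsThrough (σ := (Set.Iic i).domRestrict) (fun a b hab => ?_)
    (fun z => ?_) z
  · rw [Set.domRestrict_eq_domRestrict_iff] at hab ⊢
    exact hab.mono Set.Iio_subset_Iic_self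
  · have hiff (c : Fin m → α) : (∀ i' : Fin m, i' ≤ i → c i' = z i') ↔
        (Set.Iic i).domRestrict c = (Set.Iic i).domRestrict z :=
      Set.domRestrict_eq_domRestrict_iff.symm
    have := h z
    rw [sum_filter_eq_fiberMass w hiff, sum_filter_eq_fiberMass w hiff] at this
    rw [fiberMass_mul_right (g := fun _ => q) fun _ _ _ => rfl]
    simpa [mul_comm q] using this

lemma isCondBernoulli_of_prod_col {Unf : (Fin m → Fin n → α) → ℝ}
    {col : Fin n → (Fin m → α) → ℝ} (hprod : ∀ x, Unf x = ∏ j, col j (fun i => x i j))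
    {E : Fin m → Fin n → Finset (Fin m → α)} {δm : Fin m → Fin n → ℝ} {i : Fin m}
    (hcond : ∀ (j : Fin n) (z : Fin m → α),
      ∑ c ∈ (E i j).filter (fun c => ∀ i' : Fin m, i' ≤ i → c i' = z i'), col j c =
        δm i j *
          ∑ c ∈ univ.filter (fun c : Fin m → α => ∀ i' : Fin m, i' ≤ i → c i' = z i'), col j c) :
    IsCondBernoulli Unf (Set.Iio i).domRestrict (fun y j => (fun i' => y i' j) ∈ E i j)
      (δm i) := by
  intro x e
  have hcol (j : Fin n) (z : Fin m → α) :
      fiberMass (fun c => col j c * if c ∈ E i j then e j else 1) (Set.Iio i).domRestrict z =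
        fiberMass (col j) (Set.Iio i).domRestrict z * (1 + δm i j * (e j - 1)) := by
    have hsplit : (fun c => col j c * if c ∈ E i j then e j else 1) =
        fun c => col j c + (if c ∈ E i j then col j c else 0) * (e j - 1) := by
      funext c
      split_ifs <;> ring
    rw [hsplit, fiberMass_add, fiberMass_mul_right (g := fun _ => e j - 1) fun _ _ _ => rfl,
      fiberMass_ite_mem_eq_mul (hcond j)]
    ring
  rw [funext hprod]
  simp only [← prod_mul_distrib]
  rw [fiberMass_prod_col (fun j c => col j c * if c ∈ E i j then e j else 1),
    fiberMass_prod_col, ← prod_mul_distrib]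
  exact prod_congr rfl fun j _ => hcol j _

end Matrix

lemma IsDist.exists_pos {β : Type*} [Fintype β] {P : β → ℝ} (h : IsDist P) : ∃ x, 0 < P x := by
  obtain ⟨x, -, hx⟩ := (sum_pos_iff_of_nonneg fun x _ => h.1 x).1 (h.2 ▸ one_pos)
  exact ⟨x, hx⟩

theorem rho_bound_general {α : Type*} [Fintype α] [DecidableEq α] (m n : ℕ)
    (Unf : (Fin m → Fin n → α) → ℝ)
    (col : Fin n → (Fin m → α) → ℝ) (hcol : ∀ j, IsDist (col j))
    (hprod : ∀ x, Unf x = ∏ j, col j (fun i => x i j))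
    (W : Finset (Fin m → Fin n → α))
    (E : Fin m → Fin n → Finset (Fin m → α))
    (δ : ℝ) (hδ : 0 < δ)
    (δm : Fin m → Fin n → ℝ) (hδm : ∀ i j, δ ≤ δm i j)
    (hcond : ∀ (i : Fin m) (j : Fin n) (z : Fin m → α),
      ∑ c ∈ (E i j).filter (fun c => ∀ i' : Fin m, i' ≤ i → c i' = z i'), col j c =
        δm i j *
          ∑ c ∈ univ.filter (fun c : Fin m → α => ∀ i' : Fin m, i' ≤ i → c i' = z i'),
            col j c)
    (d : ℝ)
    (hd : d = ∑ i : Fin m, ∑ x : Fin m → Fin n → α,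
        (if x ∈ W then Unf x / ∑ z ∈ W, Unf z else 0) *
          Real.log
            (((∑ y ∈ W.filter (fun y =>
                  (∀ j : Fin n, y i j = x i j) ∧
                  (∀ j : Fin n,
                    ((fun i' => y i' j) ∈ E i j ↔ (fun i' => x i' j) ∈ E i j)) ∧
                  ∀ i' : Fin m, i' < i → y i' = x i'), Unf y) /
               (∑ y ∈ W.filter (fun y => ∀ i' : Fin m, i' < i → y i' = x i'), Unf y)) /
             ((∑ y ∈ univ.filter (fun y : Fin m → Fin n → α =>
                  (∀ j : Fin n, y i j = x i j) ∧
                  (∀ j : Fin n,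
                    ((fun i' => y i' j) ∈ E i j ↔ (fun i' => x i' j) ∈ E i j)) ∧
                  ∀ i' : Fin m, i' < i → y i' = x i'), Unf y) /
               (∑ y ∈ univ.filter (fun y : Fin m → Fin n → α =>
                  ∀ i' : Fin m, i' < i → y i' = x i'), Unf y)))) :
    ∑ x : Fin m → Fin n → α,
        (if x ∈ W then Unf x / ∑ z ∈ W, Unf z else 0) *
          ∑ i : Fin m, ∑ j : Fin n,
            (fun ρ => min |ρ| (ρ ^ 2))
              ((∑ y ∈ W.filter (fun y =>
                    ((fun i' => y i' j) ∈ E i j) ∧ ∀ i' : Fin m, i' < i → y i' = x i'),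
                  Unf y) /
                (δm i j *
                  ∑ y ∈ W.filter (fun y => ∀ i' : Fin m, i' < i → y i' = x i'), Unf y) -
                1) ≤
      4 * d / δ := by
  have hU : ∀ x, 0 ≤ Unf x := fun x => hprod x ▸ prod_nonneg fun j _ => (hcol j).1 _
  have hq1 (i : Fin m) (j : Fin n) : δm i j ≤ 1 :=
    le_one_of_fiberMass_ite_eq_mul (hcol j).1 (hcol j).exists_pos
      (fiberMass_ite_mem_eq_mul (hcond i j))
  have hrow (i : Fin m) := mul_sum_min_abs_sq_condDeviation_le_condKLDiv
    (p := fun y => if y ∈ W then Unf y else 0) (φ := (Set.Iio i).domRestrict)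
    (ψ := rowCell E i) (fun y => by split_ifs; exacts [hU y, le_rfl]) hU
    (fun y hy => by split_ifs at hy; exacts [hy, hy.false.elim])
    (fun a b h => congrArg Prod.fst h)
    (fun a b h => funext fun j => propext ((rowCell_eq_iff.1 h).2.1 j)) hδ (hδm i) (hq1 i)
    (isCondBernoulli_of_prod_col hprod (hcond i))
  have hsum := sum_le_sum fun i (_ : i ∈ univ) => hrow i
  simp only [← mul_sum] at hsum
  rw [sum_comm] at hsum
  simp only [← mul_sum, condKLDiv, condDeviation] at hsum
  -- every conditional sum over `W` is a fiber mass of `1_W · Unf`; the normaliser factors out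
  simp only [sum_filter_prefix, sum_filter_mem_prefix, sum_filter_rowCell, mem_univ, if_true]
    at hd ⊢
  have hwT (x : Fin m → Fin n → α) : (if x ∈ W then Unf x / ∑ z ∈ W, Unf z else 0) =
      (∑ z ∈ W, Unf z)⁻¹ * if x ∈ W then Unf x else 0 := by
    split_ifs <;> simp [div_eq_inv_mul]
  simp only [hwT, mul_assoc, ← mul_sum] at hd ⊢
  rw [hd, mul_left_comm, mul_div_assoc]
  refine mul_le_mul_of_nonneg_left ?_ (inv_nonneg.2 (sum_nonneg fun x _ => hU x))
  rw [le_div_iff₀ hδ]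
  linarith

/-- Let `Unf` be a column-independent distribution over `m × n` matrices
(`hprod` with column distributions `col j`), `W` an event with `Unf[W] > 0`, and
`Idl = Unf | W`. The events `E i j` are determined by column `j` and satisfy
`Unf[E i j | X_{≤i,j}] = δm i j ≥ δ` for every fixing of the first `i+1` entries
of column `j` (`hcond`). With
`ρ_{i,j}(x_{<i}) = Idl[E i j | X_{<i} = x_{<i}] / δm i j − 1` and `d` the sum of
conditional divergences `∑ᵢ D(Idl_{Xᵢ Yᵢ} || Unf_{Xᵢ Yᵢ} | Idl_{X_{<i}})`
(written as expectations over `x ~ Idl` of log-ratios of conditional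
probabilities, where `Yᵢⱼ` indicates `E i j`), we have
`E_{Idl}[∑ᵢ∑ⱼ min(|ρ_{i,j}|, ρ_{i,j}²)] ≤ 4 d / δ`. -/
theorem rho_bound {α : Type*} [Fintype α] [DecidableEq α] (m n : ℕ)
    (Unf : (Fin m → Fin n → α) → ℝ) (hUnf : IsDist Unf)
    (col : Fin n → (Fin m → α) → ℝ) (hcol : ∀ j, IsDist (col j))
    (hprod : ∀ x, Unf x = ∏ j, col j (fun i => x i j))
    (W : Finset (Fin m → Fin n → α)) (hW : 0 < ∑ x ∈ W, Unf x)
    (E : Fin m → Fin n → Finset (Fin m → α))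
    (δ : ℝ) (hδ : 0 < δ)
    (δm : Fin m → Fin n → ℝ) (hδm : ∀ i j, δ ≤ δm i j)
    (hcond : ∀ (i : Fin m) (j : Fin n) (z : Fin m → α),
      ∑ c ∈ (E i j).filter (fun c => ∀ i' : Fin m, i' ≤ i → c i' = z i'), col j c =
        δm i j *
          ∑ c ∈ univ.filter (fun c : Fin m → α => ∀ i' : Fin m, i' ≤ i → c i' = z i'),
            col j c)
    (d : ℝ)
    (hd : d = ∑ i : Fin m, ∑ x : Fin m → Fin n → α,
        (if x ∈ W then Unf x / ∑ z ∈ W, Unf z else 0) *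
          Real.log
            (((∑ y ∈ W.filter (fun y =>
                  (∀ j : Fin n, y i j = x i j) ∧
                  (∀ j : Fin n,
                    ((fun i' => y i' j) ∈ E i j ↔ (fun i' => x i' j) ∈ E i j)) ∧
                  ∀ i' : Fin m, i' < i → y i' = x i'), Unf y) /
               (∑ y ∈ W.filter (fun y => ∀ i' : Fin m, i' < i → y i' = x i'), Unf y)) /
             ((∑ y ∈ univ.filter (fun y : Fin m → Fin n → α =>
                  (∀ j : Fin n, y i j = x i j) ∧
                  (∀ j : Fin n,
                    ((fun i' => y i' j) ∈ E i j ↔ (fun i' => x i' j) ∈ E i j)) ∧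
                  ∀ i' : Fin m, i' < i → y i' = x i'), Unf y) /
               (∑ y ∈ univ.filter (fun y : Fin m → Fin n → α =>
                  ∀ i' : Fin m, i' < i → y i' = x i'), Unf y)))) :
    ∑ x : Fin m → Fin n → α,
        (if x ∈ W then Unf x / ∑ z ∈ W, Unf z else 0) *
          ∑ i : Fin m, ∑ j : Fin n,
            (fun ρ => min |ρ| (ρ ^ 2))
              ((∑ y ∈ W.filter (fun y =>
                    ((fun i' => y i' j) ∈ E i j) ∧ ∀ i' : Fin m, i' < i → y i' = x i'),
                  Unf y) /
                (δm i j *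
                  ∑ y ∈ W.filter (fun y => ∀ i' : Fin m, i' < i → y i' = x i'), Unf y) -
                1) ≤
      4 * d / δ :=
  rho_bound_general m n Unf col hcol hprod W E δ hδ δm hδm hcond d hd
end
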